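/- arXiv:2205.07064 — 4 statements merged into one kernel-verified Lean document; each statement's English description precedes it below -/
import Mathlib

section
/- Let S be a local symmetric good semigroup with maximal ideal M_S = S ∖ {0}. If M_S − M_S is symmetric, then for every α ∈ M_S ∖ C_S there is an n ∈ ℕ such that α = n·μ_{M_S}. In particular, S = {n·μ_{M_S} : n ∈ ℕ} ∪ C_S. -/
/-! Combinatorics of good semigroups in `ℤ^I` (value semigroups of curve
singularities), following Korell–Schulze–Tozzo. -/

section GoodSemigroups

variable {I : Type*} [Fintype I] [Nonempty I]

/-- Property (E0): `E` contains a translate of `ℕ^I`, i.e. an upper cone. -/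
def propE0 (E : Set (I → ℤ)) : Prop :=
  ∃ α : I → ℤ, ∀ β : I → ℤ, α ≤ β → β ∈ E

/-- Property (E1): closure under componentwise minima. -/
def propE1 (E : Set (I → ℤ)) : Prop :=
  ∀ α ∈ E, ∀ β ∈ E, (fun i => min (α i) (β i)) ∈ E

/-- Property (E2). -/
def propE2 (E : Set (I → ℤ)) : Prop :=
  ∀ α ∈ E, ∀ β ∈ E, ∀ j : I, α j = β j →
    ∃ ε ∈ E, α j < ε j ∧
      ∀ i : I, min (α i) (β i) ≤ ε i ∧ (α i ≠ β i → ε i = min (α i) (β i))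

/-- A good semigroup: a submonoid of `ℤ^I` whose unique minimal element is `0`
(equivalently all elements are `≥ 0`) satisfying (E0), (E1) and (E2). -/
def IsGoodSemigroup (S : Set (I → ℤ)) : Prop :=
  (0 : I → ℤ) ∈ S ∧ (∀ α ∈ S, ∀ β ∈ S, α + β ∈ S) ∧ (∀ α ∈ S, 0 ≤ α) ∧
    propE0 S ∧ propE1 S ∧ propE2 S

/-- The difference `E − F = {α : α + F ⊆ E}`. -/
def sgDiff (E F : Set (I → ℤ)) : Set (I → ℤ) :=
  {α | ∀ β ∈ F, α + β ∈ E}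

/-- A semigroup ideal of a good semigroup `S`. -/
def IsSgIdeal (S E : Set (I → ℤ)) : Prop :=
  E.Nonempty ∧ (∀ α ∈ E, ∀ β ∈ S, α + β ∈ E) ∧ ∃ α ∈ S, ∀ β ∈ E, α + β ∈ S

/-- A good semigroup ideal of `S`: a semigroup ideal satisfying (E1) and (E2). -/
def IsGoodIdeal (S E : Set (I → ℤ)) : Prop :=
  IsSgIdeal S E ∧ propE1 E ∧ propE2 E

/-- The (componentwise) minimal element `μ_E` of a good semigroup ideal. -/
noncomputable def sgMu (E : Set (I → ℤ)) : I → ℤ :=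
  fun i => sInf {n : ℤ | ∃ α ∈ E, α i = n}

/-- The conductor ideal `C_E = E − ℕ^I`. -/
def sgCond (E : Set (I → ℤ)) : Set (I → ℤ) :=
  sgDiff E {β | 0 ≤ β}

/-- The conductor `γ_E = μ_{C_E} = inf {α : α + ℕ^I ⊆ E}`. -/
noncomputable def sgGamma (E : Set (I → ℤ)) : I → ℤ :=
  sgMu (sgCond E)

/-- `τ_E = γ_E − 1`. -/
noncomputable def sgTau (E : Set (I → ℤ)) : I → ℤ :=
  sgGamma E - 1

/-- `Δ(α) = ⋃ i Δ_i(α)` where `Δ_i(α) = {β : β i = α i, β j > α j (j ≠ i)}`. -/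
def sgDelta (α : I → ℤ) : Set (I → ℤ) :=
  ⋃ i : I, {β | β i = α i ∧ ∀ j : I, j ≠ i → α j < β j}

/-- The closed version `Δ̄(α)`. -/
def sgDeltaBar (α : I → ℤ) : Set (I → ℤ) :=
  ⋃ i : I, {β | β i = α i ∧ ∀ j : I, j ≠ i → α j ≤ β j}

/-- A canonical ideal of `S`: a good semigroup ideal `K` such that any good
semigroup ideal `E` with `γ_E = γ_K` containing `K` equals `K`. -/
def IsCanonicalIdeal (S K : Set (I → ℤ)) : Prop :=
  IsGoodIdeal S K ∧
    ∀ E : Set (I → ℤ), IsGoodIdeal S E → sgGamma E = sgGamma K → K ⊆ E → E = K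

/-- The normalized canonical ideal `K_S^0`. -/
noncomputable def sgK0 (S : Set (I → ℤ)) : Set (I → ℤ) :=
  {α | sgDelta (sgTau S - α) ∩ S = ∅}

/-- A good semigroup is symmetric if it is a canonical ideal of itself. -/
def IsSymmetricSg (S : Set (I → ℤ)) : Prop :=
  IsGoodSemigroup S ∧ IsCanonicalIdeal S S

/-- A good semigroup is local if `0` is its only element with a zero coordinate. -/
def IsLocalSg (S : Set (I → ℤ)) : Prop :=
  ∀ α ∈ S, (∃ i : I, α i = 0) → α = 0

/-- A good semigroup ideal `E` is stable if `μ_E + (E − E) = E`. -/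
noncomputable def IsStableSgIdeal (E : Set (I → ℤ)) : Prop :=
  (fun β => sgMu E + β) '' sgDiff E E = E

end GoodSemigroups

section ProofAux

variable {I : Type*} [Fintype I] [Nonempty I]

namespace SgAux

/-- A nonempty, bounded-below, inf-closed set attains its componentwise minimum. -/
lemma mu_spec {E : Set (I → ℤ)} (hne : E.Nonempty) (hpos : ∀ α ∈ E, ∀ i, (0:ℤ) ≤ α i)
    (hE1 : propE1 E) : sgMu E ∈ E ∧ ∀ β ∈ E, ∀ i, sgMu E i ≤ β i := by
  classical
  have hbdd : ∀ i : I, BddBelow {n : ℤ | ∃ α ∈ E, α i = n} := by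
    intro i
    exact ⟨0, by rintro n ⟨α, hα, rfl⟩; exact hpos α hα i⟩
  have hle : ∀ β ∈ E, ∀ i, sgMu E i ≤ β i := by
    intro β hβ i
    exact csInf_le (hbdd i) ⟨β, hβ, rfl⟩
  refine ⟨?_, hle⟩
  have key : ∀ s : Finset I, ∃ β ∈ E, ∀ i ∈ s, β i = sgMu E i := by
    intro s
    induction s using Finset.induction_on with
    | empty => obtain ⟨α, hα⟩ := hne; exact ⟨α, hα, by simp⟩
    | @insert i s hi ih =>
      obtain ⟨β, hβ, hβs⟩ := ih
      have hnei : {n : ℤ | ∃ α ∈ E, α i = n}.Nonempty := by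
        obtain ⟨α, hα⟩ := hne; exact ⟨α i, α, hα, rfl⟩
      obtain ⟨αi, hαi, hαieq⟩ := Int.csInf_mem hnei (hbdd i)
      refine ⟨fun k => min (β k) (αi k), hE1 β hβ αi hαi, ?_⟩
      have hb : ∀ k, (fun k => min (β k) (αi k)) k = min (β k) (αi k) := fun k => rfl
      intro k hk
      rw [hb k]
      clear hb
      rcases Finset.mem_insert.1 hk with h | h
      · have h1 : sgMu E k ≤ β k := hle β hβ k
        have h2 : αi k = sgMu E k := by rw [h]; exact hαieq
        rw [min_comm, h2]
        exact min_eq_left h1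
      · have h1 : β k = sgMu E k := hβs k h
        have h2 : sgMu E k ≤ αi k := hle αi hαi k
        rw [h1]
        exact min_eq_left h2
  obtain ⟨β, hβ, hcoords⟩ := key Finset.univ
  have : β = sgMu E := funext fun i => hcoords i (Finset.mem_univ i)
  rwa [this] at hβ

lemma mem_cond_iff {E : Set (I → ℤ)} {z : I → ℤ} :
    z ∈ sgCond E ↔ ∀ w, z ≤ w → w ∈ E := by
  constructor
  · intro h w hw
    have h0 : (0:I→ℤ) ≤ w - z := by
      intro i; simpa using sub_nonneg.2 (hw i)
    have := h (w - z) h0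
    have heq : z + (w - z) = w := by funext i; simp
    rwa [heq] at this
  · intro h β hβ
    exact h (z + β) (fun i => by simpa using hβ i)

variable {T : Set (I → ℤ)}

lemma gTpos (hT : IsGoodSemigroup T) : ∀ α ∈ T, ∀ i, (0:ℤ) ≤ α i :=
  fun α hα i => hT.2.2.1 α hα i

lemma cond_sub : sgCond T ⊆ T := fun z hz => mem_cond_iff.1 hz z le_rfl

lemma cond_upward {z w : I → ℤ} (hz : z ∈ sgCond T) (hzw : z ≤ w) : w ∈ sgCond T := by
  rw [mem_cond_iff] at hz ⊢
  exact fun u hu => hz u (le_trans hzw hu)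

lemma cond_nonempty (hT : IsGoodSemigroup T) : (sgCond T).Nonempty := by
  obtain ⟨α, hα⟩ := hT.2.2.2.1
  refine ⟨fun i => max (α i) 0, ?_⟩
  rw [mem_cond_iff]
  intro w hw
  exact hα w (fun i => le_trans (le_max_left _ _) (hw i))

lemma cond_pos (hT : IsGoodSemigroup T) : ∀ z ∈ sgCond T, ∀ i, (0:ℤ) ≤ z i :=
  fun z hz i => gTpos hT z (cond_sub hz) i

lemma cond_E1 (hT : IsGoodSemigroup T) : propE1 (sgCond T) := by
  intro z hz z' hz'
  rw [mem_cond_iff]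
  intro w hw
  have hu : (fun i => max (w i) (z i)) ∈ T :=
    cond_sub (cond_upward hz (fun i => le_max_right _ _))
  have hv : (fun i => max (w i) (z' i)) ∈ T :=
    cond_sub (cond_upward hz' (fun i => le_max_right _ _))
  have := hT.2.2.2.2.1 _ hu _ hv
  have heq : (fun i => min (max (w i) (z i)) (max (w i) (z' i))) = w := by
    funext i
    have h1 : min (z i) (z' i) ≤ w i := hw i
    show min (max (w i) (z i)) (max (w i) (z' i)) = w i
    omega
  rwa [heq] at this

lemma gamma_spec (hT : IsGoodSemigroup T) :
    sgGamma T ∈ sgCond T ∧ ∀ z ∈ sgCond T, ∀ i, sgGamma T i ≤ z i :=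
  mu_spec (cond_nonempty hT) (cond_pos hT) (cond_E1 hT)

lemma gamma_cone (hT : IsGoodSemigroup T) :
    ∀ w, (∀ i, sgGamma T i ≤ w i) → w ∈ T :=
  fun w hw => mem_cond_iff.1 (gamma_spec hT).1 w hw

lemma gamma_le (hT : IsGoodSemigroup T) : ∀ z ∈ sgCond T, ∀ i, sgGamma T i ≤ z i :=
  (gamma_spec hT).2

lemma gamma_pos (hT : IsGoodSemigroup T) : ∀ i, (0:ℤ) ≤ sgGamma T i :=
  fun i => cond_pos hT _ (gamma_spec hT).1 i

/-- Fact 1: `Δ^T(τ) = ∅` for a good semigroup. -/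
lemma delta_tau (hT : IsGoodSemigroup T) :
    ∀ β ∈ T, ∀ i : I, β i = sgGamma T i - 1 → (∀ k, k ≠ i → sgGamma T k ≤ β k) → False := by
  classical
  intro β0 hβ0 i hβ0i hβ0k
  have raise : ∀ n : ℕ, ∀ β, β ∈ T → β i = sgGamma T i - 1 → (∀ k, k ≠ i → sgGamma T k ≤ β k) →
      ∀ η : I → ℤ, η i = sgGamma T i - 1 → (∀ k, k ≠ i → sgGamma T k ≤ η k) →
      (∑ k, (η k - β k).toNat) ≤ n → η ∈ T := by
    intro n
    induction n using Nat.strong_induction_on with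
    | _ n ih =>
      intro β hβ hβi hβk η hηi hηk hsum
      by_cases hcase : ∀ k, k ≠ i → η k ≤ β k
      · have hδ' : (fun k => if k = i then sgGamma T i else η k) ∈ T := by
          apply gamma_cone hT
          intro k
          by_cases hk : k = i
          · simp [hk]
          · simp only [if_neg hk]; exact hηk k hk
        have hmin := hT.2.2.2.2.1 β hβ _ hδ'
        have heq : (fun m => min (β m) (if m = i then sgGamma T i else η m)) = η := by
          funext m
          by_cases hm : m = i
          · subst hm; simp only [if_pos rfl]; omega
          · simp only [if_neg hm]
            have := hcase m hm
            omega
        rwa [heq] at hmin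
      · push_neg at hcase
        obtain ⟨k, hki, hklt⟩ := hcase
        have hδ'' : (fun m => if m = k then β k else max (max (sgGamma T m) (β m + 1)) (η m + 1)) ∈ T := by
          apply gamma_cone hT
          intro m
          by_cases hm : m = k
          · subst hm; simp only [if_pos rfl]; exact hβk m hki
          · simp only [if_neg hm]
            have := le_max_left (sgGamma T m) (β m + 1)
            exact le_trans this (le_max_left _ _)
        have hβk' : β k = (fun m => if m = k then β k else max (max (sgGamma T m) (β m + 1)) (η m + 1)) k := by
          simp
        obtain ⟨ζ, hζT, hζk, hζm⟩ := hT.2.2.2.2.2 β hβ _ hδ'' k hβk'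
        have hζeq : ∀ m, m ≠ k → ζ m = β m := by
          intro m hm
          have hne : β m ≠ (fun m => if m = k then β k else max (max (sgGamma T m) (β m + 1)) (η m + 1)) m := by
            simp only [if_neg hm]
            have := le_max_right (sgGamma T m) (β m + 1)
            have h2 := le_max_left (max (sgGamma T m) (β m + 1)) (η m + 1)
            omega
          have := (hζm m).2 hne
          simp only [if_neg hm] at this
          have h3 := le_max_right (sgGamma T m) (β m + 1)
          have h4 := le_max_left (max (sgGamma T m) (β m + 1)) (η m + 1)
          omega
        have hik : i ≠ k := fun h => hki h.symm
        have hsum' : (∑ m, (η m - ζ m).toNat) < (∑ m, (η m - β m).toNat) := by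
          apply Finset.sum_lt_sum
          · intro m _
            by_cases hm : m = k
            · subst hm; omega
            · rw [hζeq m hm]
          · exact ⟨k, Finset.mem_univ k, by omega⟩
        apply ih (∑ m, (η m - ζ m).toNat) (lt_of_lt_of_le hsum' hsum) ζ hζT
        · rw [hζeq i hik]; exact hβi
        · intro m hm
          by_cases hmk : m = k
          · subst hmk
            have := hβk m hm
            omega
          · rw [hζeq m hmk]; exact hβk m hm
        · exact hηi
        · exact hηk
        · exact le_rfl
  have hge : (fun k => if k = i then sgGamma T i - 1 else sgGamma T k) ∈ sgCond T := by
    rw [mem_cond_iff]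
    intro w hw
    by_cases hwi : sgGamma T i ≤ w i
    · apply gamma_cone hT
      intro k
      by_cases hk : k = i
      · subst hk; exact hwi
      · have := hw k; simp only [if_neg hk] at this; exact this
    · have hwi' : w i = sgGamma T i - 1 := by
        have := hw i; simp only [if_pos rfl] at this; omega
      apply raise (∑ k, (w k - β0 k).toNat) β0 hβ0 hβ0i hβ0k w hwi'
      · intro k hk
        have := hw k; simp only [if_neg hk] at this; exact this
      · exact le_rfl
  have hfin : sgGamma T i ≤ sgGamma T i - 1 := by
    have h := gamma_le hT _ hge i
    simpa using h
  omega

lemma mem_sgDelta {x β : I → ℤ} :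
    β ∈ sgDelta x ↔ ∃ i, β i = x i ∧ ∀ k, k ≠ i → x k < β k := by
  simp [sgDelta]

lemma mem_K0 {T : Set (I → ℤ)} {α : I → ℤ} :
    α ∈ sgK0 T ↔ ∀ β ∈ T, ∀ i, ¬(β i = sgGamma T i - 1 - α i ∧
      ∀ k, k ≠ i → sgGamma T k - 1 - α k < β k) := by
  have hτ : ∀ k, (sgTau T - α) k = sgGamma T k - 1 - α k := by
    intro k; simp [sgTau]
  unfold sgK0
  rw [Set.mem_setOf_eq, Set.eq_empty_iff_forall_notMem]
  constructor
  · rintro h β hβ i ⟨h1, h2⟩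
    refine h β ⟨mem_sgDelta.2 ⟨i, ?_, ?_⟩, hβ⟩
    · rw [hτ]; exact h1
    · intro k hk; rw [hτ]; exact h2 k hk
  · rintro h z ⟨hzΔ, hzT⟩
    obtain ⟨i, h1, h2⟩ := mem_sgDelta.1 hzΔ
    refine h z hzT i ⟨?_, ?_⟩
    · rw [← hτ]; exact h1
    · intro k hk; rw [← hτ]; exact h2 k hk

lemma sub_K0 (hT : IsGoodSemigroup T) : T ⊆ sgK0 T := by
  intro α hα
  rw [mem_K0]
  rintro β hβ i ⟨h1, h2⟩
  apply delta_tau hT (α + β) (hT.2.1 α hα β hβ) i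
  · show α i + β i = sgGamma T i - 1
    omega
  · intro k hk
    have := h2 k hk
    show sgGamma T k ≤ α k + β k
    omega

lemma K0_pos (hT : IsGoodSemigroup T) : ∀ α ∈ sgK0 T, ∀ i, (0:ℤ) ≤ α i := by
  classical
  intro α hα i
  by_contra hneg
  push_neg at hneg
  rw [mem_K0] at hα
  have hmem : (fun k => if k = i then sgGamma T i - 1 - α i else
      max (sgGamma T k) (sgGamma T k - α k)) ∈ T := by
    apply gamma_cone hT
    intro k
    by_cases hk : k = i
    · subst hk; simp only [if_pos rfl]; omega
    · simp only [if_neg hk]; exact le_max_left _ _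
  apply hα _ hmem i
  constructor
  · simp
  · intro k hk
    simp only [if_neg hk]
    have h1 := le_max_right (sgGamma T k) (sgGamma T k - α k)
    omega

lemma K0_stable (hT : IsGoodSemigroup T) :
    ∀ α ∈ sgK0 T, ∀ s ∈ T, α + s ∈ sgK0 T := by
  intro α hα s hs
  rw [mem_K0] at hα ⊢
  rintro β hβ i ⟨h1, h2⟩
  apply hα (β + s) (hT.2.1 β hβ s hs) i
  have h1' : β i = sgGamma T i - 1 - (α i + s i) := h1
  refine ⟨?_, ?_⟩
  · show β i + s i = sgGamma T i - 1 - α i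
    omega
  · intro k hk
    have h2' : sgGamma T k - 1 - (α k + s k) < β k := h2 k hk
    show sgGamma T k - 1 - α k < β k + s k
    omega

lemma K0_inf (hT : IsGoodSemigroup T) :
    ∀ a ∈ sgK0 T, ∀ b ∈ sgK0 T, (fun i => min (a i) (b i)) ∈ sgK0 T := by
  intro a ha b hb
  rw [mem_K0] at ha hb ⊢
  rintro β hβ i ⟨h1, h2⟩
  have h1' : β i = sgGamma T i - 1 - min (a i) (b i) := h1
  have h2' : ∀ k, k ≠ i → sgGamma T k - 1 - min (a k) (b k) < β k := h2
  rcases le_total (a i) (b i) with h | h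
  · refine ha β hβ i ⟨by omega, fun k hk => ?_⟩
    have := h2' k hk
    have := min_le_left (a k) (b k)
    omega
  · refine hb β hβ i ⟨by omega, fun k hk => ?_⟩
    have := h2' k hk
    have := min_le_right (a k) (b k)
    omega

lemma cond_K0 (hT : IsGoodSemigroup T) : sgCond (sgK0 T) = sgCond T := by
  classical
  ext z
  constructor
  · intro hz
    have hzγ : ∀ i, sgGamma T i ≤ z i := by
      intro i
      by_contra hlt
      push_neg at hlt
      have hw : (fun k => if k = i then sgGamma T i - 1 else max (z k) (sgGamma T k)) ∈ sgK0 T := by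
        apply mem_cond_iff.1 hz
        intro k
        by_cases hk : k = i
        · subst hk; simp only [if_pos rfl]; omega
        · simp only [if_neg hk]; exact le_max_left _ _
      rw [mem_K0] at hw
      apply hw 0 hT.1 i
      constructor
      · simp
      · intro k hk
        have h1 := le_max_right (z k) (sgGamma T k)
        show sgGamma T k - 1 - (if k = i then sgGamma T i - 1 else max (z k) (sgGamma T k)) < (0:I→ℤ) k
        simp only [if_neg hk, Pi.zero_apply]
        omega
    rw [mem_cond_iff]
    exact fun w hw => gamma_cone hT w (fun i => le_trans (hzγ i) (hw i))
  · intro hz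
    rw [mem_cond_iff] at hz ⊢
    exact fun w hw => sub_K0 hT (hz w hw)

lemma gamma_K0 (hT : IsGoodSemigroup T) : sgGamma (sgK0 T) = sgGamma T := by
  unfold sgGamma
  rw [cond_K0 hT]

lemma sgIdeal_K0 (hT : IsGoodSemigroup T) : IsSgIdeal T (sgK0 T) := by
  refine ⟨⟨0, sub_K0 hT hT.1⟩, fun α hα s hs => K0_stable hT α hα s hs,
    ⟨sgGamma T, cond_sub (gamma_spec hT).1, ?_⟩⟩
  intro β hβ
  apply gamma_cone hT
  intro i
  have := K0_pos hT β hβ i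
  show sgGamma T i ≤ sgGamma T i + β i
  omega

/-- Abstract blocking/avoidance construction. -/
lemma SP (y : I → ℤ) :
    ∀ (L : Finset I) (Bb Gg : Set (I → ℤ)),
    (∀ g ∈ Gg, ∀ i, (0:ℤ) ≤ g i) →
    (∀ β ∈ Bb, ∃ l ∈ L, β l < y l) →
    (∀ β ∈ Bb, ∀ g ∈ Gg, ∀ l ∈ L, β l = g l →
      ∃ h ∈ Bb, β l < h l ∧ ∀ m, min (β m) (g m) ≤ h m ∧ (β m ≠ g m → h m = min (β m) (g m))) →
    (∀ g ∈ Gg, ∀ g' ∈ Gg, ∀ l ∈ L, g l = g' l →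
      ∃ h ∈ Gg, g l < h l ∧ ∀ m, min (g m) (g' m) ≤ h m ∧ (g m ≠ g' m → h m = min (g m) (g' m))) →
    ∃ x : I → ℤ, (∀ l ∈ L, x l < y l) ∧ (∀ β ∈ Bb, ∃ l ∈ L, β l ≤ x l) ∧
      (∀ g ∈ Gg, ∀ l ∈ L, ¬(g l = x l ∧ ∀ m ∈ L, m ≠ l → x m < g m)) := by
  classical
  intro L
  induction L using Finset.strongInduction with
  | _ L ih =>
    intro Bb Gg hgpos hs1 hpbg hpgg
    rcases Finset.eq_empty_or_nonempty L with rfl | ⟨l, hl⟩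
    · refine ⟨0, by simp, fun β hβ => ?_, by simp⟩
      obtain ⟨m, hm, _⟩ := hs1 β hβ
      exact absurd hm (by simp)
    · set L' := L.erase l with hL'def
      have hL'ss : L' ⊂ L := Finset.erase_ssubset hl
      have hkey : ∃ xl : ℤ, xl < y l ∧ (∀ g ∈ Gg, g l = xl → ∃ m ∈ L', g m < y m) ∧
          (∀ β ∈ Bb, xl < β l → ∃ m ∈ L', β m < y m) := by
        set VS : Set ℤ := {v | ∃ β, (β ∈ Bb ∧ β l < y l ∧ ∀ m ∈ L', y m ≤ β m) ∧ β l = v}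
          with hVSdef
        by_cases hO : VS.Nonempty
        · have hbddV : BddAbove VS := by
            refine ⟨y l, ?_⟩
            rintro v ⟨β, hβO, rfl⟩
            exact le_of_lt hβO.2.1
          obtain ⟨β₀, hβ₀O, hβ₀l⟩ := Int.csSup_mem hO hbddV
          refine ⟨sSup VS, by rw [← hβ₀l]; exact hβ₀O.2.1, ?_, ?_⟩
          · intro g hg hgl
            by_contra hno
            push_neg at hno
            obtain ⟨h, hhB, hhl, hhmin⟩ :=
              hpbg β₀ hβ₀O.1 g hg l hl (by rw [hβ₀l, hgl])
            obtain ⟨m, hmL, hmlt⟩ := hs1 h hhB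
            by_cases hml : m = l
            · subst hml
              have hOnly : h m ∈ VS := by
                refine ⟨h, ⟨hhB, hmlt, fun m' hm' => ?_⟩, rfl⟩
                have h1 := (hhmin m').1
                have h2 := hβ₀O.2.2 m' hm'
                have h3 := hno m' hm'
                omega
              have hle := le_csSup hbddV hOnly
              omega
            · have hm' : m ∈ L' := Finset.mem_erase.2 ⟨hml, hmL⟩
              have h1 := (hhmin m).1
              have h2 := hβ₀O.2.2 m hm'
              have h3 := hno m hm'
              omega
          · intro β hβ hlt
            obtain ⟨m, hmL, hmlt⟩ := hs1 β hβ
            by_cases hml : m = l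
            · subst hml
              by_cases hall : ∀ m' ∈ L', y m' ≤ β m'
              · exfalso
                have hmem : β m ∈ VS := ⟨β, ⟨hβ, hmlt, hall⟩, rfl⟩
                have := le_csSup hbddV hmem
                omega
              · push_neg at hall
                exact hall
            · exact ⟨m, Finset.mem_erase.2 ⟨hml, hmL⟩, hmlt⟩
        · refine ⟨min (-1) (y l - 1), ?_, ?_, ?_⟩
          · have := min_le_right (-1 : ℤ) (y l - 1); omega
          · intro g hg hgl
            exfalso
            have := hgpos g hg l
            have := min_le_left (-1 : ℤ) (y l - 1)
            omega
          · intro β hβ hlt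
            obtain ⟨m, hmL, hmlt⟩ := hs1 β hβ
            by_cases hml : m = l
            · subst hml
              by_cases hall : ∀ m' ∈ L', y m' ≤ β m'
              · exact absurd ⟨β m, β, ⟨hβ, hmlt, hall⟩, rfl⟩ hO
              · push_neg at hall
                exact hall
            · exact ⟨m, Finset.mem_erase.2 ⟨hml, hmL⟩, hmlt⟩
      obtain ⟨xl, hxl, hGX, hBX⟩ := hkey
      set Bb' : Set (I → ℤ) := {β | (β ∈ Bb ∧ xl < β l) ∨ (β ∈ Gg ∧ β l = xl)} with hBb'def
      set Gg' : Set (I → ℤ) := {g | g ∈ Gg ∧ xl < g l} with hGg'def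
      have hinB' : ∀ β, β ∈ Bb' ↔ (β ∈ Bb ∧ xl < β l) ∨ (β ∈ Gg ∧ β l = xl) := fun β => Iff.rfl
      have hinG' : ∀ g, g ∈ Gg' ↔ (g ∈ Gg ∧ xl < g l) := fun g => Iff.rfl
      have hgpos' : ∀ g ∈ Gg', ∀ i, (0:ℤ) ≤ g i := fun g hg i => hgpos g hg.1 i
      have hs1' : ∀ β ∈ Bb', ∃ m ∈ L', β m < y m := by
        intro β hβ
        rcases hβ with ⟨hβ, hlt⟩ | ⟨hβ, heq⟩
        · exact hBX β hβ hlt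
        · exact hGX β hβ heq
      have hpbg' : ∀ β ∈ Bb', ∀ g ∈ Gg', ∀ m ∈ L', β m = g m →
          ∃ h ∈ Bb', β m < h m ∧ ∀ k, min (β k) (g k) ≤ h k ∧
            (β k ≠ g k → h k = min (β k) (g k)) := by
        intro β hβ' g hg' m hm hbm
        obtain ⟨hg, hglt⟩ := hg'
        rcases hβ' with ⟨hβ, hlt⟩ | ⟨hβ, heq⟩
        · obtain ⟨h, hhB, hh1, hh2⟩ := hpbg β hβ g hg m (Finset.mem_of_mem_erase hm) hbm
          refine ⟨h, Or.inl ⟨hhB, ?_⟩, hh1, hh2⟩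
          have := (hh2 l).1
          omega
        · obtain ⟨h, hhG, hh1, hh2⟩ := hpgg β hβ g hg m (Finset.mem_of_mem_erase hm) hbm
          refine ⟨h, Or.inr ⟨hhG, ?_⟩, hh1, hh2⟩
          have hne : β l ≠ g l := by omega
          have := (hh2 l).2 hne
          omega
      have hpgg' : ∀ g ∈ Gg', ∀ g' ∈ Gg', ∀ m ∈ L', g m = g' m →
          ∃ h ∈ Gg', g m < h m ∧ ∀ k, min (g k) (g' k) ≤ h k ∧
            (g k ≠ g' k → h k = min (g k) (g' k)) := by
        rintro g ⟨hg, hglt⟩ g' ⟨hg', hg'lt⟩ m hm hbm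
        obtain ⟨h, hhG, hh1, hh2⟩ := hpgg g hg g' hg' m (Finset.mem_of_mem_erase hm) hbm
        refine ⟨h, ⟨hhG, ?_⟩, hh1, hh2⟩
        have := (hh2 l).1
        omega
      obtain ⟨x', hx1', ha', hb'⟩ := ih L' hL'ss Bb' Gg' hgpos' hs1' hpbg' hpgg'
      refine ⟨fun m => if m = l then xl else x' m, ?_, ?_, ?_⟩
      · intro m hm
        by_cases hml : m = l
        · subst hml; simpa using hxl
        · have := hx1' m (Finset.mem_erase.2 ⟨hml, hm⟩)
          simpa [if_neg hml] using this
      · intro β hβ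
        by_cases hc : β l ≤ xl
        · exact ⟨l, hl, by simpa using hc⟩
        · obtain ⟨m, hm, hle⟩ := ha' β (Or.inl ⟨hβ, by omega⟩)
          have hml : m ≠ l := (Finset.mem_erase.1 hm).1
          exact ⟨m, Finset.mem_of_mem_erase hm, by simpa [if_neg hml] using hle⟩
      · rintro g hg i hi ⟨h1, h2⟩
        by_cases hil : i = l
        · subst hil
          simp only [if_pos rfl] at h1
          obtain ⟨m, hm, hle⟩ := ha' g (Or.inr ⟨hg, h1⟩)
          have hml : m ≠ i := (Finset.mem_erase.1 hm).1
          have h3 := h2 m (Finset.mem_of_mem_erase hm) hml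
          simp only [if_neg hml] at h3
          omega
        · have hgl : xl < g l := by
            have := h2 l hl (fun h => hil h.symm)
            simpa using this
          have hi' : i ∈ L' := Finset.mem_erase.2 ⟨hil, hi⟩
          apply hb' g ⟨hg, hgl⟩ i hi'
          constructor
          · simpa [if_neg hil] using h1
          · intro m hm hmn
            have hml : m ≠ l := (Finset.mem_erase.1 hm).1
            have := h2 m (Finset.mem_of_mem_erase hm) hmn
            simpa [if_neg hml] using this


/-- (E2) for the normalized canonical ideal. -/
lemma K0_E2 (hT : IsGoodSemigroup T) : propE2 (sgK0 T) := by
  classical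
  intro a ha b hb j hab
  set δ : I → ℤ := fun i => min (a i) (b i) with hδdef
  have hδm : ∀ i, δ i = min (a i) (b i) := fun _ => rfl
  have hδK : δ ∈ sgK0 T := K0_inf hT a ha b hb
  set y : I → ℤ := fun i => sgGamma T i - 1 - δ i with hydef
  have hyy : ∀ i, y i = sgGamma T i - 1 - δ i := fun _ => rfl
  set Bs : Set (I → ℤ) := {β | β ∈ T ∧ ∃ i, a i ≠ b i ∧ β i = y i ∧
      ∀ k, a k ≠ b k → k ≠ i → y k < β k} with hBsdef
  set Gs : Set (I → ℤ) := {β | β ∈ T ∧ ∀ k, a k ≠ b k → y k < β k} with hGsdef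
  have hBsmem : ∀ β, β ∈ Bs ↔ (β ∈ T ∧ ∃ i, a i ≠ b i ∧ β i = y i ∧
      ∀ k, a k ≠ b k → k ≠ i → y k < β k) := fun β => Iff.rfl
  have hGsmem : ∀ β, β ∈ Gs ↔ (β ∈ T ∧ ∀ k, a k ≠ b k → y k < β k) := fun β => Iff.rfl
  -- E2-pushes
  have pushBG : ∀ β ∈ Bs, ∀ g ∈ Gs, ∀ l, β l = g l →
      ∃ h ∈ Bs, β l < h l ∧ ∀ m, min (β m) (g m) ≤ h m ∧
        (β m ≠ g m → h m = min (β m) (g m)) := by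
    intro β hβ g hg l hβg
    obtain ⟨hβT, i, hiD, hβi, hβD⟩ := (hBsmem β).1 hβ
    obtain ⟨hgT, hgD⟩ := (hGsmem g).1 hg
    obtain ⟨h, hhT, hhl, hhm⟩ := hT.2.2.2.2.2 β hβT g hgT l hβg
    refine ⟨h, (hBsmem h).2 ⟨hhT, i, hiD, ?_, ?_⟩, hhl, hhm⟩
    · have hgi := hgD i hiD
      have hne : β i ≠ g i := by omega
      have := (hhm i).2 hne
      omega
    · intro k hk hki
      have h1 := (hhm k).1
      have h2 := hβD k hk hki
      have h3 := hgD k hk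
      omega
  have pushGG : ∀ g ∈ Gs, ∀ g' ∈ Gs, ∀ l, g l = g' l →
      ∃ h ∈ Gs, g l < h l ∧ ∀ m, min (g m) (g' m) ≤ h m ∧
        (g m ≠ g' m → h m = min (g m) (g' m)) := by
    intro g hg g' hg' l hgg
    obtain ⟨hgT, hgD⟩ := (hGsmem g).1 hg
    obtain ⟨hg'T, hg'D⟩ := (hGsmem g').1 hg'
    obtain ⟨h, hhT, hhl, hhm⟩ := hT.2.2.2.2.2 g hgT g' hg'T l hgg
    refine ⟨h, (hGsmem h).2 ⟨hhT, fun k hk => ?_⟩, hhl, hhm⟩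
    have := (hhm k).1
    have := hgD k hk
    have := hg'D k hk
    omega
  -- exclusion of B-elements with no touch
  have exclB0 : ∀ h ∈ Bs, (∀ l, a l = b l → y l ≤ h l) →
      (∀ l, a l = b l → h l ≠ y l) → False := by
    intro h hh hge hnt
    obtain ⟨hhT, i, hiD, hhi, hhD⟩ := (hBsmem h).1 hh
    apply mem_K0.1 hδK h hhT i
    constructor
    · have := hyy i; omega
    · intro k hk
      by_cases hkD : a k = b k
      · have h1 := hge k hkD
        have h2 := hnt k hkD
        have := hyy k
        omega
      · have := hhD k hkD hk
        have := hyy k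
        omega
  -- exclusion of B-elements with a single touch (uses the anchors a, b)
  have exclB1 : ∀ h ∈ Bs, (∀ l, a l = b l → y l ≤ h l) → ∀ l, a l = b l → h l = y l →
      (∀ m, a m = b m → h m = y m → m = l) → False := by
    intro h hh hge l hlR hhl huniq
    obtain ⟨hhT, i, hiD, hhi, hhD⟩ := (hBsmem h).1 hh
    rcases le_or_gt (a i) (b i) with hc | hc
    · apply mem_K0.1 hb h hhT l
      constructor
      · have := hyy l; have := hδm l; omega
      · intro k hk
        by_cases hkD : a k = b k
        · have h1 := hge k hkD
          have h2 : h k ≠ y k := fun he => hk (huniq k hkD he)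
          have := hyy k; have := hδm k
          omega
        · by_cases hki : k = i
          · subst hki
            have := hyy k; have := hδm k
            omega
          · have := hhD k hkD hki
            have := hyy k; have := hδm k
            omega
    · apply mem_K0.1 ha h hhT l
      constructor
      · have := hyy l; have := hδm l; omega
      · intro k hk
        by_cases hkD : a k = b k
        · have h1 := hge k hkD
          have h2 : h k ≠ y k := fun he => hk (huniq k hkD he)
          have := hyy k; have := hδm k
          omega
        · by_cases hki : k = i
          · subst hki
            have := hyy k; have := hδm k
            omega
          · have := hhD k hkD hki
            have := hyy k; have := hδm k
            omega
  -- the closure stages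
  set step : Set I → Set I := fun Ln => Ln ∪ {l | a l = b l ∧ ∃ g ∈ Gs,
      (∀ m, a m = b m → y m ≤ g m) ∧ g l = y l ∧
      ∀ m, a m = b m → g m = y m → m ≠ l → m ∈ Ln} with hstepdef
  set Lw : ℕ → Set I := fun n => step^[n] {j} with hLwdef
  have hLwS : ∀ n, Lw (n+1) = step (Lw n) := by
    intro n
    show step^[n+1] {j} = step (step^[n] {j})
    exact Function.iterate_succ_apply' step n {j}
  have hLw0 : Lw 0 = {j} := rfl
  have hLwmono : ∀ n m, n ≤ m → Lw n ⊆ Lw m := by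
    intro n m hnm
    induction m, hnm using Nat.le_induction with
    | base => exact subset_rfl
    | succ m hm ihm =>
      rw [hLwS m]
      exact fun x hx => Or.inl (ihm hx)
  set LL : Set I := {l | ∃ n, l ∈ Lw n} with hLLdef
  have hjL : j ∈ LL := ⟨0, by rw [hLw0]; exact rfl⟩
  have hLR : ∀ l ∈ LL, a l = b l := by
    have key : ∀ n, ∀ l ∈ Lw n, a l = b l := by
      intro n
      induction n with
      | zero =>
        intro l hl
        rw [hLw0] at hl
        have : l = j := hl
        rw [this]; exact hab
      | succ n ihn =>
        intro l hl
        rw [hLwS n] at hl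
        rcases hl with h | h
        · exact ihn l h
        · exact h.1
    rintro l ⟨n, hn⟩
    exact key n l hn
  have hstageuni : ∀ s : Finset I, (∀ m ∈ s, m ∈ LL) → ∃ N, ∀ m ∈ s, m ∈ Lw N := by
    intro s
    induction s using Finset.induction_on with
    | empty => exact fun _ => ⟨0, by simp⟩
    | @insert i s hi ihs =>
      intro hmem
      obtain ⟨N, hN⟩ := ihs (fun m hm => hmem m (Finset.mem_insert_of_mem hm))
      obtain ⟨N', hN'⟩ := hmem i (Finset.mem_insert_self i s)
      refine ⟨max N N', fun m hm => ?_⟩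
      rcases Finset.mem_insert.1 hm with rfl | hm
      · exact hLwmono N' _ (le_max_right _ _) hN'
      · exact hLwmono N _ (le_max_left _ _) (hN m hm)
  have hCP : ∀ g ∈ Gs, (∀ m, a m = b m → y m ≤ g m) → ∀ l, a l = b l → g l = y l →
      (∀ m, a m = b m → g m = y m → m ≠ l → m ∈ LL) → l ∈ LL := by
    intro g hg hge l hlR hgl hrest
    obtain ⟨N, hN⟩ := hstageuni
      (Finset.univ.filter (fun m => a m = b m ∧ g m = y m ∧ m ≠ l))
      (by
        intro m hm
        rw [Finset.mem_filter] at hm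
        exact hrest m hm.2.1 hm.2.2.1 hm.2.2.2)
    refine ⟨N + 1, ?_⟩
    rw [hLwS N]
    right
    exact ⟨hlR, g, hg, hge, hgl, fun m hm1 hm2 hm3 =>
      hN m (Finset.mem_filter.2 ⟨Finset.mem_univ m, hm1, hm2, hm3⟩)⟩
  -- no B-element of W-type has all its touches inside LL
  have hNBE : ∀ h ∈ Bs, (∀ l, a l = b l → y l ≤ h l) →
      ∃ l, a l = b l ∧ h l = y l ∧ l ∉ LL := by
    intro h0 hh0 hge0
    by_contra hno
    push_neg at hno
    have main : ∀ n : ℕ, ∀ h ∈ Bs, (∀ l, a l = b l → y l ≤ h l) →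
        (∀ l, a l = b l → h l = y l → l ∈ Lw n) → False := by
      intro n
      induction n with
      | zero =>
        intro h hhB hge htouch
        by_cases ht : ∃ l, a l = b l ∧ h l = y l
        · obtain ⟨l, hlR, hly⟩ := ht
          apply exclB1 h hhB hge l hlR hly
          intro m hm1 hm2
          have h1 : m ∈ Lw 0 := htouch m hm1 hm2
          have h2 : l ∈ Lw 0 := htouch l hlR hly
          rw [hLw0] at h1 h2
          have e1 : m = j := h1
          have e2 : l = j := h2
          rw [e1, e2]
        · push_neg at ht
          exact exclB0 h hhB hge ht
      | succ n ihn =>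
        have inner : ∀ cnt : ℕ, ∀ h ∈ Bs, (∀ l, a l = b l → y l ≤ h l) →
            (∀ l, a l = b l → h l = y l → l ∈ Lw (n+1)) →
            (Finset.univ.filter (fun l => a l = b l ∧ h l = y l ∧ l ∉ Lw n)).card ≤ cnt →
            False := by
          intro cnt
          induction cnt with
          | zero =>
            intro h hhB hge htouch hcard
            apply ihn h hhB hge
            intro l hl1 hl2
            by_contra hnot
            have hmem : l ∈ Finset.univ.filter (fun l => a l = b l ∧ h l = y l ∧ l ∉ Lw n) :=
              Finset.mem_filter.2 ⟨Finset.mem_univ l, hl1, hl2, hnot⟩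
            have := Finset.card_pos.2 ⟨l, hmem⟩
            omega
          | succ cnt ihc =>
            intro h hhB hge htouch hcard
            rcases Finset.eq_empty_or_nonempty
              (Finset.univ.filter (fun l => a l = b l ∧ h l = y l ∧ l ∉ Lw n)) with hemp | hne
            · apply ihn h hhB hge
              intro l hl1 hl2
              by_contra hnot
              have hmem : l ∈ Finset.univ.filter (fun l => a l = b l ∧ h l = y l ∧ l ∉ Lw n) :=
                Finset.mem_filter.2 ⟨Finset.mem_univ l, hl1, hl2, hnot⟩
              rw [hemp] at hmem
              exact absurd hmem (Finset.notMem_empty l)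
            · obtain ⟨l, hlmem⟩ := hne
              obtain ⟨-, hlR, hly, hlnot⟩ := Finset.mem_filter.1 hlmem
              have hlin : l ∈ Lw (n+1) := htouch l hlR hly
              rw [hLwS n] at hlin
              rcases hlin with hlin | hlin
              · exact absurd hlin hlnot
              · obtain ⟨-, g, hgG, hgge, hgl, hgrest⟩ := hlin
                obtain ⟨h', hh'B, hh'l, hh'm⟩ := pushBG h hhB g hgG l (by rw [hly, hgl])
                have hge' : ∀ m, a m = b m → y m ≤ h' m := by
                  intro m hmR
                  have := (hh'm m).1
                  have := hge m hmR
                  have := hgge m hmR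
                  omega
                have htouch' : ∀ m, a m = b m → h' m = y m → m ∈ Lw (n+1) := by
                  intro m hmR hmy
                  have h1 := (hh'm m).1
                  have h2 := hge m hmR
                  have h3 := hgge m hmR
                  have hm_or : h m = y m ∨ g m = y m := by
                    by_contra hcon
                    push_neg at hcon
                    omega
                  have hml : m ≠ l := by
                    intro he
                    rw [he] at hmy
                    omega
                  rcases hm_or with hm | hm
                  · exact htouch m hmR hm
                  · exact hLwmono n (n+1) (Nat.le_succ n) (hgrest m hmR hm hml)
                apply ihc h' hh'B hge' htouch'
                have hsub : (Finset.univ.filter (fun m => a m = b m ∧ h' m = y m ∧ m ∉ Lw n)) ⊆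
                    (Finset.univ.filter (fun m => a m = b m ∧ h m = y m ∧ m ∉ Lw n)) := by
                  intro m hm
                  obtain ⟨-, hmR, hmy, hmnot⟩ := Finset.mem_filter.1 hm
                  refine Finset.mem_filter.2 ⟨Finset.mem_univ m, hmR, ?_, hmnot⟩
                  have h1 := (hh'm m).1
                  have h2 := hge m hmR
                  have h3 := hgge m hmR
                  have hm_or : h m = y m ∨ g m = y m := by
                    by_contra hcon
                    push_neg at hcon
                    omega
                  rcases hm_or with hmm | hmm
                  · exact hmm
                  · exfalso
                    have hml : m ≠ l := by
                      intro he
                      rw [he] at hmy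
                      omega
                    exact hmnot (hgrest m hmR hmm hml)
                have hlnot' : l ∉ (Finset.univ.filter (fun m => a m = b m ∧ h' m = y m ∧ m ∉ Lw n)) := by
                  intro hmem
                  obtain ⟨-, -, hly', -⟩ := Finset.mem_filter.1 hmem
                  omega
                have hss : (Finset.univ.filter (fun m => a m = b m ∧ h' m = y m ∧ m ∉ Lw n)) ⊂
                    (Finset.univ.filter (fun m => a m = b m ∧ h m = y m ∧ m ∉ Lw n)) :=
                  ⟨hsub, fun hsup => hlnot' (hsup hlmem)⟩
                have := Finset.card_lt_card hss
                omega
        intro h hhB hge htouch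
        exact inner (Finset.univ.filter (fun l => a l = b l ∧ h l = y l ∧ l ∉ Lw n)).card
          h hhB hge htouch le_rfl
    obtain ⟨N, hN⟩ := hstageuni (Finset.univ.filter (fun l => a l = b l ∧ h0 l = y l))
      (by
        intro m hm
        rw [Finset.mem_filter] at hm
        exact hno m hm.2.1 hm.2.2)
    exact main N h0 hh0 hge0 (fun l h1 h2 =>
      hN l (Finset.mem_filter.2 ⟨Finset.mem_univ l, h1, h2⟩))
  -- instantiate the abstract construction
  set LF : Finset I := Finset.univ.filter (fun l => l ∈ LL) with hLFdef
  have hLFmem : ∀ l, l ∈ LF ↔ l ∈ LL := by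
    intro l
    constructor
    · intro h
      exact (Finset.mem_filter.1 h).2
    · intro h
      exact Finset.mem_filter.2 ⟨Finset.mem_univ l, h⟩
  set Bb : Set (I → ℤ) := {β | (β ∈ Bs ∧ ∀ k, a k = b k → k ∉ LL → y k < β k) ∨
      (β ∈ Gs ∧ ∃ l₀, a l₀ = b l₀ ∧ l₀ ∉ LL ∧ β l₀ = y l₀ ∧
        ∀ k, a k = b k → k ∉ LL → k ≠ l₀ → y k < β k)} with hBbdef
  set Gg : Set (I → ℤ) := {g | g ∈ Gs ∧ ∀ k, a k = b k → k ∉ LL → y k < g k} with hGgdef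
  have hBbmem : ∀ β, β ∈ Bb ↔ ((β ∈ Bs ∧ ∀ k, a k = b k → k ∉ LL → y k < β k) ∨
      (β ∈ Gs ∧ ∃ l₀, a l₀ = b l₀ ∧ l₀ ∉ LL ∧ β l₀ = y l₀ ∧
        ∀ k, a k = b k → k ∉ LL → k ≠ l₀ → y k < β k)) := fun β => Iff.rfl
  have hGgmem : ∀ g, g ∈ Gg ↔ (g ∈ Gs ∧ ∀ k, a k = b k → k ∉ LL → y k < g k) :=
    fun g => Iff.rfl
  have hgpos : ∀ g ∈ Gg, ∀ i, (0:ℤ) ≤ g i := by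
    intro g hg i
    exact gTpos hT g ((hGgmem g).1 hg).1.1 i
  have hs1 : ∀ β ∈ Bb, ∃ l ∈ LF, β l < y l := by
    intro β hβ
    rcases (hBbmem β).1 hβ with ⟨hβB, hclean⟩ | ⟨hβG, l₀, hl₀R, hl₀n, hl₀y, hclean⟩
    · by_cases hW : ∀ l, a l = b l → y l ≤ β l
      · exfalso
        obtain ⟨l, hlR, hly, hln⟩ := hNBE β hβB hW
        have := hclean l hlR hln
        omega
      · push_neg at hW
        obtain ⟨l, hlR, hlt⟩ := hW
        have hlL : l ∈ LL := by
          by_contra hn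
          have := hclean l hlR hn
          omega
        exact ⟨l, (hLFmem l).2 hlL, hlt⟩
    · by_cases hW : ∀ l, a l = b l → y l ≤ β l
      · exfalso
        apply hl₀n
        apply hCP β hβG hW l₀ hl₀R hl₀y
        intro m hm1 hm2 hm3
        by_contra hn
        have := hclean m hm1 hn hm3
        omega
      · push_neg at hW
        obtain ⟨l, hlR, hlt⟩ := hW
        have hlL : l ∈ LL := by
          by_contra hn
          by_cases hll₀ : l = l₀
          · rw [hll₀] at hlt; omega
          · have := hclean l hlR hn hll₀; omega
        exact ⟨l, (hLFmem l).2 hlL, hlt⟩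
  have hpbg : ∀ β ∈ Bb, ∀ g ∈ Gg, ∀ l ∈ LF, β l = g l →
      ∃ h ∈ Bb, β l < h l ∧ ∀ m, min (β m) (g m) ≤ h m ∧
        (β m ≠ g m → h m = min (β m) (g m)) := by
    intro β hβ g hg l hlF hbg
    obtain ⟨hgG, hgclean⟩ := (hGgmem g).1 hg
    rcases (hBbmem β).1 hβ with ⟨hβB, hclean⟩ | ⟨hβG, l₀, hl₀R, hl₀n, hl₀y, hclean⟩
    · obtain ⟨h, hhB, hhl, hhm⟩ := pushBG β hβB g hgG l hbg
      refine ⟨h, (hBbmem h).2 (Or.inl ⟨hhB, ?_⟩), hhl, hhm⟩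
      intro k hk1 hk2
      have := (hhm k).1
      have := hclean k hk1 hk2
      have := hgclean k hk1 hk2
      omega
    · obtain ⟨h, hhG, hhl, hhm⟩ := pushGG β hβG g hgG l hbg
      refine ⟨h, (hBbmem h).2 (Or.inr ⟨hhG, l₀, hl₀R, hl₀n, ?_, ?_⟩), hhl, hhm⟩
      · have hgl₀ := hgclean l₀ hl₀R hl₀n
        have hne : β l₀ ≠ g l₀ := by omega
        have := (hhm l₀).2 hne
        omega
      · intro k hk1 hk2 hk3
        have := (hhm k).1
        have := hclean k hk1 hk2 hk3
        have := hgclean k hk1 hk2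
        omega
  have hpgg : ∀ g ∈ Gg, ∀ g' ∈ Gg, ∀ l ∈ LF, g l = g' l →
      ∃ h ∈ Gg, g l < h l ∧ ∀ m, min (g m) (g' m) ≤ h m ∧
        (g m ≠ g' m → h m = min (g m) (g' m)) := by
    intro g hg g' hg' l hlF hgg
    obtain ⟨hgG, hgclean⟩ := (hGgmem g).1 hg
    obtain ⟨hg'G, hg'clean⟩ := (hGgmem g').1 hg'
    obtain ⟨h, hhG, hhl, hhm⟩ := pushGG g hgG g' hg'G l hgg
    refine ⟨h, (hGgmem h).2 ⟨hhG, fun k hk1 hk2 => ?_⟩, hhl, hhm⟩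
    have := (hhm k).1
    have := hgclean k hk1 hk2
    have := hg'clean k hk1 hk2
    omega
  obtain ⟨x, hx1, hxa, hxb⟩ := SP y LF Bb Gg hgpos hs1 hpbg hpgg
  -- the witness
  set ε : I → ℤ := fun i => if i ∈ LL then sgGamma T i - 1 - x i else δ i with hεdef
  have hεin : ∀ i, i ∈ LL → ε i = sgGamma T i - 1 - x i := by
    intro i h; show (if i ∈ LL then _ else _) = _; rw [if_pos h]
  have hεout : ∀ i, i ∉ LL → ε i = δ i := by
    intro i h; show (if i ∈ LL then _ else _) = _; rw [if_neg h]
  have hεK : ε ∈ sgK0 T := by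
    rw [mem_K0]
    rintro β hβT i ⟨h1, h2⟩
    by_cases hiL : i ∈ LL
    · have hεi := hεin i hiL
      have h1' : β i = x i := by omega
      have hβGg : β ∈ Gg := by
        refine (hGgmem β).2 ⟨(hGsmem β).2 ⟨hβT, fun k hk => ?_⟩, fun k hk1 hk2 => ?_⟩
        · have hki : k ≠ i := fun he => hk (by rw [he]; exact hLR i hiL)
          have h3 := h2 k hki
          have hkL : k ∉ LL := fun hkL => hk (hLR k hkL)
          have := hεout k hkL
          have := hyy k
          omega
        · have hki : k ≠ i := fun he => hk2 (by rw [he]; exact hiL)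
          have h3 := h2 k hki
          have := hεout k hk2
          have := hyy k
          omega
      apply hxb β hβGg i ((hLFmem i).2 hiL)
      refine ⟨h1'.symm ▸ rfl, ?_⟩
      intro m hmF hmi
      have hmL := (hLFmem m).1 hmF
      have h3 := h2 m hmi
      have := hεin m hmL
      omega
    · have hεi := hεout i hiL
      have := hyy i
      have h1' : β i = y i := by omega
      by_cases hiD : a i = b i
      · have hβBb : β ∈ Bb := by
          refine (hBbmem β).2 (Or.inr ⟨(hGsmem β).2 ⟨hβT, fun k hk => ?_⟩,
            i, hiD, hiL, h1', fun k hk1 hk2 hk3 => ?_⟩)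
          · have hki : k ≠ i := fun he => hk (by rw [he]; exact hiD)
            have h3 := h2 k hki
            have hkL : k ∉ LL := fun hkL => hk (hLR k hkL)
            have := hεout k hkL
            have := hyy k
            omega
          · have h3 := h2 k hk3
            have := hεout k hk2
            have := hyy k
            omega
        obtain ⟨l, hlF, hle⟩ := hxa β hβBb
        have hlL := (hLFmem l).1 hlF
        have hli : l ≠ i := fun he => hiL (by rw [← he]; exact hlL)
        have h3 := h2 l hli
        have := hεin l hlL
        have hxly := hx1 l hlF
        omega
      · have hβBb : β ∈ Bb := by
          refine (hBbmem β).2 (Or.inl ⟨(hBsmem β).2 ⟨hβT, i, hiD, h1', fun k hk1 hk2 => ?_⟩,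
            fun k hk1 hk2 => ?_⟩)
          · have h3 := h2 k hk2
            have hkL : k ∉ LL := fun hkL => hk1 (hLR k hkL)
            have := hεout k hkL
            have := hyy k
            omega
          · have hki : k ≠ i := fun he => hiD (by rw [← he]; exact hk1)
            have h3 := h2 k hki
            have := hεout k hk2
            have := hyy k
            omega
        obtain ⟨l, hlF, hle⟩ := hxa β hβBb
        have hlL := (hLFmem l).1 hlF
        have hli : l ≠ i := fun he => hiD (by rw [← he]; exact hLR l hlL)
        have h3 := h2 l hli
        have := hεin l hlL
        omega
  refine ⟨ε, hεK, ?_, ?_⟩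
  · have hjF : j ∈ LF := (hLFmem j).2 hjL
    have := hx1 j hjF
    have := hεin j hjL
    have := hyy j
    have := hδm j
    omega
  · intro i
    by_cases hiL : i ∈ LL
    · have := hεin i hiL
      have := hx1 i ((hLFmem i).2 hiL)
      have := hyy i
      have := hδm i
      constructor
      · omega
      · intro hne
        exact absurd (hLR i hiL) hne
    · have := hεout i hiL
      have := hδm i
      exact ⟨by omega, fun _ => by omega⟩

lemma goodIdeal_K0 (hT : IsGoodSemigroup T) : IsGoodIdeal T (sgK0 T) :=
  ⟨sgIdeal_K0 hT, fun α hα β hβ => K0_inf hT α hα β hβ, K0_E2 hT⟩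

lemma K0_eq_of_symmetric (hsym : IsSymmetricSg T) : sgK0 T = T := by
  obtain ⟨hT, hcan⟩ := hsym
  exact hcan.2 (sgK0 T) (goodIdeal_K0 hT) (gamma_K0 hT) (sub_K0 hT)

end SgAux

end ProofAux

/-- **Lemma.** Let `S` be a local symmetric good semigroup with maximal ideal
`M_S = S \ {0}`. If `M_S − M_S` is symmetric, then every `α ∈ M_S \ C_S` is a
natural multiple of `μ_{M_S}`; in particular `S = ⟨μ_{M_S}⟩ ∪ C_S`. -/
theorem stmt_11 {I : Type*} [Fintype I] [Nonempty I] (S : Set (I → ℤ))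
    (hS : IsSymmetricSg S) (hloc : IsLocalSg S)
    (hMM : IsSymmetricSg (sgDiff (S \ {0}) (S \ {0}))) :
    (∀ α ∈ (S \ {0}) \ sgCond S, ∃ n : ℕ, α = n • sgMu (S \ {0})) ∧
    S = {α | ∃ n : ℕ, α = n • sgMu (S \ {0})} ∪ sgCond S := by
  classical
  obtain ⟨hgood, hcan⟩ := hS
  set M : Set (I → ℤ) := S \ {0} with hMdef
  have hSpos : ∀ s ∈ S, ∀ i, (0:ℤ) ≤ s i := SgAux.gTpos hgood
  have hMpos1 : ∀ m ∈ M, ∀ i, (1:ℤ) ≤ m i := by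
    intro m hm i
    have h0 := hSpos m hm.1 i
    rcases lt_or_eq_of_le h0 with h | h
    · omega
    · exact absurd (hloc m hm.1 ⟨i, h.symm⟩) hm.2
  have hMne : M.Nonempty := by
    refine ⟨fun i => sgGamma S i + 1, ⟨?_, ?_⟩⟩
    · apply SgAux.gamma_cone hgood
      intro i
      show sgGamma S i ≤ sgGamma S i + 1
      omega
    · intro h0
      have h1 : sgGamma S (Classical.arbitrary I) + 1 = (0:I→ℤ) (Classical.arbitrary I) :=
        congrFun h0 (Classical.arbitrary I)
      have h2 := SgAux.gamma_pos hgood (Classical.arbitrary I)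
      have h3 : (0:I→ℤ) (Classical.arbitrary I) = 0 := rfl
      omega
  have hME1 : propE1 M := by
    intro α hα β hβ
    refine ⟨hgood.2.2.2.2.1 α hα.1 β hβ.1, ?_⟩
    intro h0
    have h1 : min (α (Classical.arbitrary I)) (β (Classical.arbitrary I)) =
        (0:I→ℤ) (Classical.arbitrary I) := congrFun h0 (Classical.arbitrary I)
    have h2 := hMpos1 α hα (Classical.arbitrary I)
    have h3 := hMpos1 β hβ (Classical.arbitrary I)
    have h4 : (0:I→ℤ) (Classical.arbitrary I) = 0 := rfl
    omega
  obtain ⟨hμmem, hμle⟩ := SgAux.mu_spec hMne (fun m hm i => by have := hMpos1 m hm i; omega) hME1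
  have hμ1 : ∀ i, (1:ℤ) ≤ sgMu M i := fun i => hMpos1 _ hμmem i
  have hmulμ : ∀ n : ℕ, (n • sgMu M) ∈ S := by
    intro n
    induction n with
    | zero => rw [zero_nsmul]; exact hgood.1
    | succ n ihn =>
      rw [succ_nsmul]
      exact hgood.2.1 _ ihn _ hμmem.1
  by_cases hA : (0:I→ℤ) ∈ sgCond S
  · constructor
    · intro α hα
      exact absurd (SgAux.cond_upward hA (fun i => hSpos α hα.1.1 i)) hα.2
    · ext s
      constructor
      · intro hs
        exact Or.inr (SgAux.cond_upward hA (fun i => hSpos s hs i))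
      · rintro (⟨n, rfl⟩ | hs)
        · exact hmulμ n
        · exact SgAux.cond_sub hs
  · have hγ1 : ∀ i, (1:ℤ) ≤ sgGamma S i := by
      intro i
      have hγC := (SgAux.gamma_spec hgood).1
      have hγ0 := SgAux.gamma_pos hgood
      by_contra hlt
      push_neg at hlt
      have hi : sgGamma S i = 0 := by have := hγ0 i; omega
      have hz : sgGamma S = 0 := hloc _ (SgAux.cond_sub hγC) ⟨i, hi⟩
      rw [hz] at hγC
      exact hA hγC
    have hS'good := hMM.1
    have hSsub' : S ⊆ sgDiff M M := by
      intro s hs m hm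
      refine ⟨hgood.2.1 s hs m hm.1, ?_⟩
      intro h0
      have h1 : s (Classical.arbitrary I) + m (Classical.arbitrary I) =
          (0:I→ℤ) (Classical.arbitrary I) := congrFun h0 (Classical.arbitrary I)
      have h2 := hSpos s hs (Classical.arbitrary I)
      have h3 := hMpos1 m hm (Classical.arbitrary I)
      have h4 : (0:I→ℤ) (Classical.arbitrary I) = 0 := rfl
      omega
    have hγ'b : sgGamma S - sgMu M ∈ sgCond (sgDiff M M) := by
      rw [SgAux.mem_cond_iff]
      intro w hw m hm
      have hcoord : ∀ i, sgGamma S i ≤ w i + m i := by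
        intro i
        have h1 : sgGamma S i - sgMu M i ≤ w i := hw i
        have h2 := hμle m hm i
        omega
      refine ⟨SgAux.gamma_cone hgood _ hcoord, ?_⟩
      intro h0
      have h1 : w (Classical.arbitrary I) + m (Classical.arbitrary I) =
          (0:I→ℤ) (Classical.arbitrary I) := congrFun h0 (Classical.arbitrary I)
      have h2 := hcoord (Classical.arbitrary I)
      have h3 := hγ1 (Classical.arbitrary I)
      have h4 : (0:I→ℤ) (Classical.arbitrary I) = 0 := rfl
      omega
    have hγ'a : ∀ z ∈ sgCond (sgDiff M M), ∀ i, sgGamma S i - sgMu M i ≤ z i := by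
      intro z hz i
      have hzμ : z + sgMu M ∈ sgCond S := by
        rw [SgAux.mem_cond_iff]
        intro w hw
        have hwμ : w - sgMu M ∈ sgDiff M M := by
          apply SgAux.mem_cond_iff.1 hz
          intro k
          have h1 : z k + sgMu M k ≤ w k := hw k
          show z k ≤ w k - sgMu M k
          omega
        have h2 := hwμ _ hμmem
        have heq : w - sgMu M + sgMu M = w := by funext k; simp
        rw [heq] at h2
        exact h2.1
      have h3 : sgGamma S i ≤ z i + sgMu M i := SgAux.gamma_le hgood _ hzμ i
      omega
    have hγ' : sgGamma (sgDiff M M) = sgGamma S - sgMu M := by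
      funext i
      have h1 : sgGamma (sgDiff M M) i ≤ sgGamma S i - sgMu M i :=
        SgAux.gamma_le hS'good _ hγ'b i
      have h2 := hγ'a _ (SgAux.gamma_spec hS'good).1 i
      show sgGamma (sgDiff M M) i = sgGamma S i - sgMu M i
      omega
    have hK0S : sgK0 S = S := SgAux.K0_eq_of_symmetric ⟨hgood, hcan⟩
    have hK0S' : sgK0 (sgDiff M M) = sgDiff M M := SgAux.K0_eq_of_symmetric hMM
    have hstep : ∀ α, α ∈ M → α ∉ sgCond S → α - sgMu M ∈ S := by
      intro α hαM hαC
      have h1 : α - sgMu M ∈ sgK0 (sgDiff M M) := by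
        rw [SgAux.mem_K0]
        rintro β hβ i ⟨hb1, hb2⟩
        have hβα : β + α ∈ M := hβ α hαM
        apply SgAux.delta_tau hgood (β + α) hβα.1 i
        · have e1 : β i = sgGamma (sgDiff M M) i - 1 - (α - sgMu M) i := hb1
          have e2 : sgGamma (sgDiff M M) i = sgGamma S i - sgMu M i := by
            rw [hγ']; rfl
          have e3 : (α - sgMu M) i = α i - sgMu M i := rfl
          show β i + α i = sgGamma S i - 1
          omega
        · intro k hk
          have e1 : sgGamma (sgDiff M M) k - 1 - (α - sgMu M) k < β k := hb2 k hk
          have e2 : sgGamma (sgDiff M M) k = sgGamma S k - sgMu M k := by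
            rw [hγ']; rfl
          have e3 : (α - sgMu M) k = α k - sgMu M k := rfl
          show sgGamma S k ≤ β k + α k
          omega
      rw [hK0S'] at h1
      by_contra hnS
      have h2 : α - sgMu M ∉ sgK0 S := by rw [hK0S]; exact hnS
      rw [SgAux.mem_K0] at h2
      push_neg at h2
      obtain ⟨β, hβS, i, hb1, hb2⟩ := h2
      by_cases hβ0 : β = 0
      · subst hβ0
        apply hαC
        apply SgAux.cond_upward (SgAux.gamma_spec hgood).1
        intro k
        show sgGamma S k ≤ α k
        by_cases hk : k = i
        · subst hk
          have e1 : (0:I→ℤ) k = sgGamma S k - 1 - (α - sgMu M) k := hb1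
          have e2 : (0:I→ℤ) k = 0 := rfl
          have e3 : (α - sgMu M) k = α k - sgMu M k := rfl
          have := hμ1 k
          omega
        · have e1 : sgGamma S k - 1 - (α - sgMu M) k < (0:I→ℤ) k := hb2 k hk
          have e2 : (0:I→ℤ) k = 0 := rfl
          have e3 : (α - sgMu M) k = α k - sgMu M k := rfl
          have := hμ1 k
          omega
      · have hβM : β ∈ M := ⟨hβS, hβ0⟩
        have hmem : α - sgMu M + β ∈ M := h1 β hβM
        apply SgAux.delta_tau hgood _ hmem.1 i
        · have e1 : β i = sgGamma S i - 1 - (α - sgMu M) i := hb1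
          have e3 : (α - sgMu M) i = α i - sgMu M i := rfl
          show (α i - sgMu M i) + β i = sgGamma S i - 1
          omega
        · intro k hk
          have e1 : sgGamma S k - 1 - (α - sgMu M) k < β k := hb2 k hk
          have e3 : (α - sgMu M) k = α k - sgMu M k := rfl
          show sgGamma S k ≤ (α k - sgMu M k) + β k
          omega
    have main : ∀ N : ℕ, ∀ α, α ∈ M → α ∉ sgCond S → (∑ i, (α i).toNat) ≤ N →
        ∃ n : ℕ, α = n • sgMu M := by
      intro N
      induction N using Nat.strong_induction_on with
      | _ N ihN =>
        intro α hαM hαC hsum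
        have hαμS : α - sgMu M ∈ S := hstep α hαM hαC
        by_cases h0 : α - sgMu M = 0
        · refine ⟨1, ?_⟩
          have heq : α = sgMu M := by
            funext i
            have h1 : α i - sgMu M i = (0:I→ℤ) i := congrFun h0 i
            have h2 : (0:I→ℤ) i = 0 := rfl
            omega
          rw [heq, one_nsmul]
        · have hαμM : α - sgMu M ∈ M := ⟨hαμS, h0⟩
          have hαμC : α - sgMu M ∉ sgCond S := by
            intro hc
            apply hαC
            apply SgAux.cond_upward hc
            intro i
            have := hμ1 i
            show α i - sgMu M i ≤ α i
            omega
          have hsum' : (∑ i, ((α - sgMu M) i).toNat) < (∑ i, (α i).toNat) := by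
            apply Finset.sum_lt_sum_of_nonempty Finset.univ_nonempty
            intro i _
            have h1 := hμ1 i
            have h2 := hMpos1 α hαM i
            have h3 : (0:ℤ) ≤ α i - sgMu M i := hSpos _ hαμS i
            have h4 : (α - sgMu M) i = α i - sgMu M i := rfl
            omega
          obtain ⟨n, hn⟩ := ihN (∑ i, ((α - sgMu M) i).toNat)
            (lt_of_lt_of_le hsum' hsum) (α - sgMu M) hαμM hαμC le_rfl
          refine ⟨n + 1, ?_⟩
          have heq : α = (α - sgMu M) + sgMu M := by funext i; simp
          rw [heq, hn, succ_nsmul]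
    refine ⟨?_, ?_⟩
    · intro α hα
      exact main (∑ i, (α i).toNat) α hα.1 hα.2 le_rfl
    · ext s
      constructor
      · intro hs
        by_cases hsC : s ∈ sgCond S
        · exact Or.inr hsC
        · by_cases hs0 : s = 0
          · exact Or.inl ⟨0, by rw [hs0, zero_nsmul]⟩
          · exact Or.inl (main (∑ i, (s i).toNat) s ⟨hs, hs0⟩ hsC le_rfl)
      · rintro (⟨n, rfl⟩ | hs)
        · exact hmulμ n
        · exact SgAux.cond_sub hs
end

section
/- Let S be a local symmetric good semigroup in ℤ^I with |I| = 2 and maximal ideal M_S = S ∖ {0}. If M_S − M_S is symmetric, then μ_{M_S} = (1,1), and there is an odd n ∈ ℕ such that S = {k·(1,1) : k ∈ ℕ} ∪ (((n+1)/2, (n+1)/2) + ℕ²). -/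
set_option linter.unusedSectionVars false
set_option linter.unusedVariables false

namespace Stmt13

structure Two (I : Type*) where
  i : I
  j : I
  ne : i ≠ j
  univ : ∀ k : I, k = i ∨ k = j

namespace Two

variable {I : Type*}

def swap (P : Two I) : Two I := ⟨P.j, P.i, P.ne.symm, fun k => (P.univ k).symm⟩

@[simp] lemma swap_i (P : Two I) : P.swap.i = P.j := rfl
@[simp] lemma swap_j (P : Two I) : P.swap.j = P.i := rfl

open scoped Classical in
noncomputable def mk2 (P : Two I) (a b : ℤ) : I → ℤ := fun k => if k = P.i then a else b

@[simp] lemma mk2_i (P : Two I) (a b : ℤ) : P.mk2 a b P.i = a := if_pos rfl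

@[simp] lemma mk2_j (P : Two I) (a b : ℤ) : P.mk2 a b P.j = b :=
  if_neg (fun h => P.ne h.symm)

lemma ext (P : Two I) {f g : I → ℤ} (h1 : f P.i = g P.i) (h2 : f P.j = g P.j) : f = g :=
  funext fun k => by rcases P.univ k with h | h <;> subst h <;> assumption

lemma le_of (P : Two I) {f g : I → ℤ} (h1 : f P.i ≤ g P.i) (h2 : f P.j ≤ g P.j) : f ≤ g :=
  fun k => by rcases P.univ k with h | h <;> subst h <;> assumption

end Two

variable {I : Type*} [Fintype I] [Nonempty I]

lemma mem_sgDelta_iff (P : Two I) {δ s : I → ℤ} :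
    s ∈ sgDelta δ ↔ (s P.i = δ P.i ∧ δ P.j < s P.j) ∨ (s P.j = δ P.j ∧ δ P.i < s P.i) := by
  unfold sgDelta
  simp only [Set.mem_iUnion, Set.mem_setOf_eq]
  constructor
  · rintro ⟨k, hk1, hk2⟩
    rcases P.univ k with h | h <;> subst h
    · exact Or.inl ⟨hk1, hk2 _ P.ne.symm⟩
    · exact Or.inr ⟨hk1, hk2 _ P.ne⟩
  · rintro (⟨h1, h2⟩ | ⟨h1, h2⟩)
    · refine ⟨P.i, h1, fun l hl => ?_⟩
      rcases P.univ l with h | h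
      · exact absurd h hl
      · subst h; exact h2
    · refine ⟨P.j, h1, fun l hl => ?_⟩
      rcases P.univ l with h | h
      · subst h; exact h2
      · exact absurd h hl

lemma mem_sgDelta_sub {δ α s : I → ℤ} : s ∈ sgDelta (δ - α) ↔ s + α ∈ sgDelta δ := by
  unfold sgDelta
  simp only [Set.mem_iUnion, Set.mem_setOf_eq, Pi.sub_apply, Pi.add_apply]
  constructor
  · rintro ⟨k, h1, h2⟩
    exact ⟨k, by omega, fun l hl => by have := h2 l hl; omega⟩
  · rintro ⟨k, h1, h2⟩
    exact ⟨k, by omega, fun l hl => by have := h2 l hl; omega⟩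

lemma mem_sgCond_iff {G : Set (I → ℤ)} {α : I → ℤ} :
    α ∈ sgCond G ↔ ∀ x : I → ℤ, α ≤ x → x ∈ G := by
  constructor
  · intro h x hx
    have h0 : (0 : I → ℤ) ≤ x - α := by
      intro k
      have h1 := Pi.le_def.mp hx k
      simp only [Pi.sub_apply, Pi.zero_apply]; omega
    have := h (x - α) h0
    rwa [show α + (x - α) = x by abel] at this
  · intro h β hβ
    have hβ' : (0 : I → ℤ) ≤ β := hβ
    refine h (α + β) ?_
    intro k
    have h1 := Pi.le_def.mp hβ' k
    simp only [Pi.add_apply] at *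
    simp only [Pi.zero_apply] at h1
    omega

lemma sgMu_le {E : Set (I → ℤ)} (b : I → ℤ) (hb : ∀ a ∈ E, b ≤ a) {a : I → ℤ}
    (ha : a ∈ E) (k : I) : sgMu E k ≤ a k :=
  csInf_le ⟨b k, by rintro n ⟨α, hα, rfl⟩; exact hb α hα k⟩ ⟨a, ha, rfl⟩

lemma sgMu_eq_of_least {E : Set (I → ℤ)} {m : I → ℤ} (hm : m ∈ E)
    (h : ∀ a ∈ E, m ≤ a) : sgMu E = m := by
  funext k
  refine le_antisymm (sgMu_le m h hm k) ?_
  refine le_csInf ⟨m k, m, hm, rfl⟩ ?_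
  rintro n ⟨α, hα, rfl⟩; exact h α hα k

lemma sgMu_mem (P : Two I) {E : Set (I → ℤ)} (hne : E.Nonempty) (b : I → ℤ)
    (hb : ∀ a ∈ E, b ≤ a)
    (hmin : ∀ a ∈ E, ∀ c ∈ E, (fun k => min (a k) (c k)) ∈ E) : sgMu E ∈ E := by
  have hatt : ∀ k : I, ∃ a ∈ E, a k = sgMu E k := by
    intro k
    have h1 : {n : ℤ | ∃ α ∈ E, α k = n}.Nonempty := ⟨hne.choose k, hne.choose, hne.choose_spec, rfl⟩
    have h2 : BddBelow {n : ℤ | ∃ α ∈ E, α k = n} :=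
      ⟨b k, by rintro n ⟨α, hα, rfl⟩; exact hb α hα k⟩
    obtain ⟨a, ha, hak⟩ := Int.csInf_mem h1 h2
    exact ⟨a, ha, hak⟩
  obtain ⟨a, ha, hai⟩ := hatt P.i
  obtain ⟨c, hc, hcj⟩ := hatt P.j
  have hm := hmin a ha c hc
  have : (fun k => min (a k) (c k)) = sgMu E := by
    refine P.ext ?_ ?_
    · show min (a P.i) (c P.i) = sgMu E P.i
      have h3 : sgMu E P.i ≤ c P.i := sgMu_le b hb hc P.i
      omega
    · show min (a P.j) (c P.j) = sgMu E P.j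
      have h3 : sgMu E P.j ≤ a P.j := sgMu_le b hb ha P.j
      omega
  rwa [this] at hm

section Good

variable {G : Set (I → ℤ)}

lemma cond_nonempty (hG : IsGoodSemigroup G) : (sgCond G).Nonempty := by
  obtain ⟨α, hα⟩ := hG.2.2.2.1
  exact ⟨α, mem_sgCond_iff.mpr hα⟩

lemma cond_subset : sgCond G ⊆ G := fun α hα => mem_sgCond_iff.mp hα α le_rfl

lemma cond_min_closed (hG : IsGoodSemigroup G) :
    ∀ a ∈ sgCond G, ∀ c ∈ sgCond G, (fun k => min (a k) (c k)) ∈ sgCond G := by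
  intro a ha c hc
  rw [mem_sgCond_iff]
  intro x hx
  have hu : (fun k => max (x k) (a k)) ∈ G := by
    refine mem_sgCond_iff.mp ha _ ?_
    intro k; exact le_max_right _ _
  have hv : (fun k => max (x k) (c k)) ∈ G := by
    refine mem_sgCond_iff.mp hc _ ?_
    intro k; exact le_max_right _ _
  have := hG.2.2.2.2.1 _ hu _ hv
  have heq : (fun k => min ((fun k => max (x k) (a k)) k) ((fun k => max (x k) (c k)) k)) = x := by
    funext k
    have := Pi.le_def.mp hx k
    simp only at this ⊢
    omega
  rwa [heq] at this

lemma gamma_mem (P : Two I) (hG : IsGoodSemigroup G) : sgGamma G ∈ sgCond G := by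
  have hb : ∀ a ∈ sgCond G, (0 : I → ℤ) ≤ a := fun a ha => hG.2.2.1 a (cond_subset ha)
  exact sgMu_mem P (cond_nonempty hG) 0 hb (cond_min_closed hG)

lemma gamma_le (hG : IsGoodSemigroup G) {a : I → ℤ} (ha : a ∈ sgCond G) (k : I) :
    sgGamma G k ≤ a k :=
  sgMu_le 0 (fun a ha => hG.2.2.1 a (cond_subset ha)) ha k

lemma cone_mem (P : Two I) (hG : IsGoodSemigroup G) {x : I → ℤ} (hx : sgGamma G ≤ x) : x ∈ G :=
  mem_sgCond_iff.mp (gamma_mem P hG) x hx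

lemma gamma_nonneg (P : Two I) (hG : IsGoodSemigroup G) : (0 : I → ℤ) ≤ sgGamma G :=
  hG.2.2.1 _ (cond_subset (gamma_mem P hG))

lemma tau_apply (k : I) : sgTau G k = sgGamma G k - 1 := by
  simp [sgTau]

lemma lemA_half (P : Two I) (hG : IsGoodSemigroup G) :
    ∀ s ∈ G, ¬(s P.i = sgTau G P.i ∧ sgTau G P.j < s P.j) := by
  rintro s hs ⟨hsi, hsj⟩
  rw [tau_apply] at hsi
  rw [tau_apply] at hsj
  have hE1 := hG.2.2.2.2.1
  have hE2 := hG.2.2.2.2.2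
  -- step 1 : for every y ≥ γ j there is z ≥ y with mk2 (γ i - 1) z ∈ G
  have step1 : ∀ y : ℤ, sgGamma G P.j ≤ y → ∃ z, y ≤ z ∧ P.mk2 (sgGamma G P.i - 1) z ∈ G := by
    refine Int.le_induction ?_ ?_
    · refine ⟨s P.j, by omega, ?_⟩
      rwa [show P.mk2 (sgGamma G P.i - 1) (s P.j) = s from P.ext (by simp [hsi]) (by simp)]
    · intro y hy ih
      obtain ⟨z, hz, hw⟩ := ih
      rcases lt_or_ge y z with h | h
      · exact ⟨z, by omega, hw⟩
      · have hzy : z = y := le_antisymm h hz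
        subst hzy
        have hv : P.mk2 (sgGamma G P.i) z ∈ G := by
          refine cone_mem P hG (P.le_of (by simp) (by simp; omega))
        obtain ⟨ε, hε, hεj, hεall⟩ := hE2 _ hw _ hv P.j (by simp)
        have hεi : ε P.i = sgGamma G P.i - 1 := by
          have h2 := (hεall P.i).2 (by simp)
          simpa using h2
        refine ⟨ε P.j, ?_, ?_⟩
        · simp only [Two.mk2_j] at hεj; omega
        · rwa [show P.mk2 (sgGamma G P.i - 1) (ε P.j) = ε from P.ext (by simp [hεi]) (by simp)]
  -- step 2
  have step2 : ∀ y : ℤ, sgGamma G P.j ≤ y → P.mk2 (sgGamma G P.i - 1) y ∈ G := by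
    intro y hy
    obtain ⟨z, hz, hw⟩ := step1 y hy
    have hv : P.mk2 (sgGamma G P.i) y ∈ G := by
      refine cone_mem P hG (P.le_of ?_ ?_) <;> simp [hy]
    have hm := hE1 _ hw _ hv
    rwa [show (fun k => min (P.mk2 (sgGamma G P.i - 1) z k) (P.mk2 (sgGamma G P.i) y k))
        = P.mk2 (sgGamma G P.i - 1) y from P.ext (by simp) (by simp; omega)] at hm
  -- step 3
  have hc : P.mk2 (sgGamma G P.i - 1) (sgGamma G P.j) ∈ sgCond G := by
    rw [mem_sgCond_iff]
    intro x hx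
    have hxi := Pi.le_def.mp hx P.i
    have hxj := Pi.le_def.mp hx P.j
    simp only [Two.mk2_i, Two.mk2_j] at hxi hxj
    rcases eq_or_lt_of_le hxi with h | h
    · rw [show x = P.mk2 (sgGamma G P.i - 1) (x P.j) from P.ext (by simp [← h]) (by simp)]
      exact step2 _ hxj
    · exact cone_mem P hG (P.le_of (by omega) (by simpa using hxj))
  have := gamma_le hG hc P.i
  simp only [Two.mk2_i] at this
  omega

lemma lemA (P : Two I) (hG : IsGoodSemigroup G) : ∀ s ∈ G, s ∉ sgDelta (sgTau G) := by
  intro s hs hmem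
  rcases (mem_sgDelta_iff P).1 hmem with h | h
  · exact lemA_half P hG s hs h
  · exact lemA_half P.swap hG s hs (by simpa using h)

lemma mem_sgK0_iff {α : I → ℤ} :
    α ∈ sgK0 G ↔ ∀ s ∈ G, s ∉ sgDelta (sgTau G - α) := by
  unfold sgK0
  simp only [Set.mem_setOf_eq, Set.eq_empty_iff_forall_notMem, Set.mem_inter_iff, not_and]
  constructor
  · intro h s hs hd; exact h s hd hs
  · intro h s hd hs; exact h s hs hd

lemma hK_subset (P : Two I) (hG : IsGoodSemigroup G) : G ⊆ sgK0 G := by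
  intro α hα
  rw [mem_sgK0_iff]
  intro s hs hd
  exact lemA P hG _ (hG.2.1 s hs α hα) (mem_sgDelta_sub.mp hd)

lemma hK_cone (P : Two I) (hG : IsGoodSemigroup G) {x : I → ℤ} (hx : sgGamma G ≤ x) :
    x ∈ sgK0 G := by
  rw [mem_sgK0_iff]
  intro s hs hd
  have hpos := Pi.le_def.mp (hG.2.2.1 s hs)
  rcases (mem_sgDelta_iff P).1 hd with ⟨h1, _⟩ | ⟨h1, _⟩
  · have h2 := Pi.le_def.mp hx P.i
    have h0 := hpos P.i
    simp only [Pi.sub_apply, tau_apply, Pi.zero_apply] at h1 h0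
    omega
  · have h2 := Pi.le_def.mp hx P.j
    have h0 := hpos P.j
    simp only [Pi.sub_apply, tau_apply, Pi.zero_apply] at h1 h0
    omega

lemma hK_nonneg_half (P : Two I) (hG : IsGoodSemigroup G) {α : I → ℤ} (hα : α ∈ sgK0 G) :
    0 ≤ α P.i := by
  by_contra h
  push_neg at h
  have hwG : P.mk2 (sgTau G P.i - α P.i) (max (sgTau G P.j - α P.j + 1) (sgGamma G P.j)) ∈ G := by
    refine cone_mem P hG (P.le_of ?_ ?_)
    · simp only [Two.mk2_i, tau_apply]; omega
    · simp only [Two.mk2_j]; exact le_max_right _ _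
  refine mem_sgK0_iff.mp hα _ hwG ((mem_sgDelta_iff P).2 (Or.inl ⟨?_, ?_⟩))
  · simp only [Two.mk2_i, Pi.sub_apply]
  · simp only [Two.mk2_j, Pi.sub_apply]
    have := le_max_left (sgTau G P.j - α P.j + 1) (sgGamma G P.j)
    omega

lemma hK_nonneg (P : Two I) (hG : IsGoodSemigroup G) {α : I → ℤ} (hα : α ∈ sgK0 G) :
    (0 : I → ℤ) ≤ α := by
  intro k
  rcases P.univ k with rfl | rfl
  · simpa using hK_nonneg_half P hG hα
  · simpa using hK_nonneg_half P.swap hG hα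

lemma hK_absorb (hG : IsGoodSemigroup G) : ∀ α ∈ sgK0 G, ∀ β ∈ G, α + β ∈ sgK0 G := by
  intro α hα β hβ
  rw [mem_sgK0_iff] at *
  intro s hs hd
  have h2 : sgTau G - (α + β) = (sgTau G - α) - β := by abel
  rw [h2] at hd
  exact hα _ (hG.2.1 s hs β hβ) (mem_sgDelta_sub.mp hd)

lemma hK_E1 (P : Two I) (hG : IsGoodSemigroup G) : propE1 (sgK0 G) := by
  intro α hα β hβ
  rw [mem_sgK0_iff] at *
  intro s hs hd
  rcases (mem_sgDelta_iff P).1 hd with ⟨h1, h2⟩ | ⟨h1, h2⟩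
  · simp only [Pi.sub_apply] at h1 h2
    rcases le_total (α P.i) (β P.i) with hmi | hmi
    · refine hα s hs ((mem_sgDelta_iff P).2 (Or.inl ⟨?_, ?_⟩)) <;>
        simp only [Pi.sub_apply] <;> omega
    · refine hβ s hs ((mem_sgDelta_iff P).2 (Or.inl ⟨?_, ?_⟩)) <;>
        simp only [Pi.sub_apply] <;> omega
  · simp only [Pi.sub_apply] at h1 h2
    rcases le_total (α P.j) (β P.j) with hmj | hmj
    · refine hα s hs ((mem_sgDelta_iff P).2 (Or.inr ⟨?_, ?_⟩)) <;>
        simp only [Pi.sub_apply] <;> omega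
    · refine hβ s hs ((mem_sgDelta_iff P).2 (Or.inr ⟨?_, ?_⟩)) <;>
        simp only [Pi.sub_apply] <;> omega

lemma hK_E2_core (P : Two I) (hG : IsGoodSemigroup G) {α β : I → ℤ}
    (hα : α ∈ sgK0 G) (hβ : β ∈ sgK0 G) (hab : α P.i = β P.i) (hlt : β P.j < α P.j) :
    ∃ ε ∈ sgK0 G, α P.i < ε P.i ∧ ε P.j = β P.j := by
  have hpos : ∀ s ∈ G, (0 : I → ℤ) ≤ s := hG.2.2.1
  by_cases hex : ∃ s ∈ G, s P.j = sgTau G P.j - β P.j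
  · have hbdd : ∀ n : ℤ, (∃ s ∈ G, s P.i = n ∧ s P.j = sgTau G P.j - β P.j) →
        n ≤ sgTau G P.i - β P.i := by
      rintro n ⟨s, hs, rfl, hsj⟩
      by_contra hgt
      push_neg at hgt
      refine mem_sgK0_iff.mp hβ s hs ((mem_sgDelta_iff P).2 (Or.inr ⟨?_, ?_⟩)) <;>
        simp only [Pi.sub_apply] <;> omega
    have hinh : ∃ n : ℤ, ∃ s ∈ G, s P.i = n ∧ s P.j = sgTau G P.j - β P.j := by
      obtain ⟨s, hs, hsj⟩ := hex; exact ⟨s P.i, s, hs, rfl, hsj⟩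
    obtain ⟨m, ⟨s0, hs0, hs0i, hs0j⟩, hmax⟩ := Int.exists_greatest_of_bdd ⟨_, hbdd⟩ hinh
    have hmle : m ≤ sgTau G P.i - β P.i := hbdd m ⟨s0, hs0, hs0i, hs0j⟩
    have hmlt : m < sgTau G P.i - α P.i := by
      rcases lt_or_ge m (sgTau G P.i - α P.i) with h | h
      · exact h
      · exfalso
        refine mem_sgK0_iff.mp hα s0 hs0 ((mem_sgDelta_iff P).2 (Or.inl ⟨?_, ?_⟩)) <;>
          simp only [Pi.sub_apply] <;> omega
    refine ⟨P.mk2 (sgTau G P.i - m) (β P.j), ?_, by simp only [Two.mk2_i]; omega,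
      by simp only [Two.mk2_j]⟩
    rw [mem_sgK0_iff]
    intro s hs hd
    rcases (mem_sgDelta_iff P).1 hd with ⟨h1, h2⟩ | ⟨h1, h2⟩
    · simp only [Pi.sub_apply, Two.mk2_i, Two.mk2_j] at h1 h2
      obtain ⟨ε', hε', hε'i, hε'all⟩ := hG.2.2.2.2.2 s0 hs0 s hs P.i (by omega)
      have hne : s0 P.j ≠ s P.j := by omega
      have hε'j := (hε'all P.j).2 hne
      have hc := hmax (ε' P.i) ⟨ε', hε', rfl, by omega⟩
      omega
    · simp only [Pi.sub_apply, Two.mk2_i, Two.mk2_j] at h1 h2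
      have hc := hmax (s P.i) ⟨s, hs, rfl, by omega⟩
      omega
  · push_neg at hex
    refine ⟨P.mk2 (max (sgTau G P.i) (α P.i) + 1) (β P.j), ?_,
      by simp only [Two.mk2_i]; omega, by simp only [Two.mk2_j]⟩
    rw [mem_sgK0_iff]
    intro s hs hd
    rcases (mem_sgDelta_iff P).1 hd with ⟨h1, h2⟩ | ⟨h1, h2⟩
    · have h0 := Pi.le_def.mp (hpos s hs) P.i
      simp only [Pi.sub_apply, Two.mk2_i, Pi.zero_apply] at h1 h0
      omega
    · simp only [Pi.sub_apply, Two.mk2_j] at h1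
      exact hex s hs (by omega)

lemma hK_E2_at (Q : Two I) (hG : IsGoodSemigroup G) : ∀ α ∈ sgK0 G, ∀ β ∈ sgK0 G,
    α Q.i = β Q.i →
    ∃ ε ∈ sgK0 G, α Q.i < ε Q.i ∧
      ∀ k, min (α k) (β k) ≤ ε k ∧ (α k ≠ β k → ε k = min (α k) (β k)) := by
  intro α hα β hβ heq
  rcases lt_trichotomy (α Q.j) (β Q.j) with h | h | h
  · obtain ⟨ε, hε, hεi, hεj⟩ := hK_E2_core Q hG hβ hα heq.symm h
    refine ⟨ε, hε, by omega, ?_⟩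
    intro k
    rcases Q.univ k with rfl | rfl
    · exact ⟨by omega, fun hne => absurd heq hne⟩
    · exact ⟨by omega, fun _ => by omega⟩
  · have hab : α = β := Q.ext heq h
    subst hab
    refine ⟨Q.mk2 (max (sgTau G Q.i) (α Q.i) + 1) (max (sgTau G Q.j) (α Q.j) + 1), ?_,
      by simp only [Two.mk2_i]; omega, ?_⟩
    · rw [mem_sgK0_iff]
      intro s hs hd
      have hp := Pi.le_def.mp (hG.2.2.1 s hs)
      rcases (mem_sgDelta_iff Q).1 hd with ⟨h1, _⟩ | ⟨h1, _⟩
      · have h0 := hp Q.i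
        simp only [Pi.sub_apply, Two.mk2_i, Pi.zero_apply] at h1 h0
        omega
      · have h0 := hp Q.j
        simp only [Pi.sub_apply, Two.mk2_j, Pi.zero_apply] at h1 h0
        omega
    · intro k
      rcases Q.univ k with rfl | rfl
      · exact ⟨by simp only [Two.mk2_i]; omega, fun hne => absurd rfl hne⟩
      · exact ⟨by simp only [Two.mk2_j]; omega, fun hne => absurd rfl hne⟩
  · obtain ⟨ε, hε, hεi, hεj⟩ := hK_E2_core Q hG hα hβ heq h
    refine ⟨ε, hε, hεi, ?_⟩
    intro k
    rcases Q.univ k with rfl | rfl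
    · exact ⟨by omega, fun hne => absurd heq hne⟩
    · exact ⟨by omega, fun _ => by omega⟩

lemma hK_gamma (P : Two I) (hG : IsGoodSemigroup G) : sgGamma (sgK0 G) = sgGamma G := by
  have hγK : sgGamma G ∈ sgCond (sgK0 G) := by
    rw [mem_sgCond_iff]; intro x hx; exact hK_cone P hG hx
  have hhalf : ∀ Q : Two I, ∀ a ∈ sgCond (sgK0 G), sgGamma G Q.i ≤ a Q.i := by
    intro Q a ha
    by_contra hcon
    push_neg at hcon
    have hp : Q.mk2 (sgTau G Q.i) (max (a Q.j) (sgTau G Q.j + 1)) ∈ sgK0 G := by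
      refine mem_sgCond_iff.mp ha _ (Q.le_of ?_ ?_)
      · simp only [Two.mk2_i, tau_apply]; omega
      · simp only [Two.mk2_j]; exact le_max_left _ _
    refine mem_sgK0_iff.mp hp 0 hG.1 ((mem_sgDelta_iff Q).2 (Or.inl ⟨?_, ?_⟩))
    · simp only [Pi.sub_apply, Pi.zero_apply, Two.mk2_i]; omega
    · have := le_max_right (a Q.j) (sgTau G Q.j + 1)
      simp only [Pi.sub_apply, Pi.zero_apply, Two.mk2_j]; omega
  have hleast : ∀ a ∈ sgCond (sgK0 G), sgGamma G ≤ a := by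
    intro a ha k
    rcases P.univ k with rfl | rfl
    · exact hhalf P a ha
    · exact hhalf P.swap a ha
  exact sgMu_eq_of_least hγK hleast

lemma hK_goodIdeal (P : Two I) (hG : IsGoodSemigroup G) : IsGoodIdeal G (sgK0 G) := by
  have hγG : sgGamma G ∈ G := cond_subset (gamma_mem P hG)
  refine ⟨⟨⟨sgGamma G, hK_cone P hG le_rfl⟩, hK_absorb hG, ⟨sgGamma G, hγG, ?_⟩⟩,
    hK_E1 P hG, ?_⟩
  · intro β hβ
    refine cone_mem P hG ?_
    intro k
    have h0 := Pi.le_def.mp (hK_nonneg P hG hβ) k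
    simp only [Pi.add_apply, Pi.zero_apply] at h0 ⊢
    omega
  · intro α hα β hβ k hk
    rcases P.univ k with rfl | rfl
    · exact hK_E2_at P hG α hα β hβ hk
    · exact hK_E2_at P.swap hG α hα β hβ hk

lemma symm_iff (P : Two I) (hG : IsGoodSemigroup G) (hcan : IsCanonicalIdeal G G) :
    ∀ α, α ∈ G ↔ ∀ s ∈ G, s ∉ sgDelta (sgTau G - α) := by
  have hKG : sgK0 G = G :=
    hcan.2 (sgK0 G) (hK_goodIdeal P hG) (hK_gamma P hG) (hK_subset P hG)
  intro α
  have h2 : α ∈ sgK0 G ↔ ∀ s ∈ G, s ∉ sgDelta (sgTau G - α) := mem_sgK0_iff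
  rwa [hKG] at h2

end Good



lemma two_of_card (hcard : Fintype.card I = 2) : Nonempty (Two I) := by
  classical
  obtain ⟨x, y, hxy, huv⟩ := Finset.card_eq_two.mp (hcard : (Finset.univ : Finset I).card = 2)
  refine ⟨⟨x, y, hxy, fun k => ?_⟩⟩
  have hk := Finset.mem_univ k
  rw [huv] at hk
  simpa using hk

end Stmt13

open Stmt13

/-- **Proposition.** Let `S` be a local symmetric good semigroup in `ℤ^I` with
`|I| = 2` and maximal ideal `M_S = S \ {0}`. If `M_S − M_S` is symmetric, then
`μ_{M_S} = (1,1)` and there is an odd `n ∈ ℕ` such that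
`S = ⟨(1,1)⟩ ∪ (((n+1)/2,(n+1)/2) + ℕ²)`. -/
theorem stmt_13 {I : Type*} [Fintype I] [Nonempty I] (hcard : Fintype.card I = 2)
    (S : Set (I → ℤ)) (hS : IsSymmetricSg S) (hloc : IsLocalSg S)
    (hMM : IsSymmetricSg (sgDiff (S \ {0}) (S \ {0}))) :
    sgMu (S \ {0}) = 1 ∧
    ∃ n : ℕ, Odd n ∧
      S = {α | ∃ k : ℕ, α = fun _ => (k : ℤ)} ∪
        {α | ∀ i : I, (((n + 1) / 2 : ℕ) : ℤ) ≤ α i} := by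
  obtain ⟨P⟩ := two_of_card hcard
  have hG : IsGoodSemigroup S := hS.1
  set M : Set (I → ℤ) := S \ {0} with hM
  set T : Set (I → ℤ) := sgDiff M M with hT
  have hGT : IsGoodSemigroup T := hMM.1
  have hsymS := symm_iff P hG hS.2
  have hsymT := symm_iff P hMM.1 hMM.2
  have hMmem : ∀ {m : I → ℤ}, m ∈ M ↔ m ∈ S ∧ m ≠ 0 := by
    intro m; simp [hM]
  have hM1 : ∀ m ∈ M, (1 : I → ℤ) ≤ m := by
    intro m hm k
    rcases hMmem.mp hm with ⟨hmS, hm0⟩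
    have h0 := Pi.le_def.mp (hG.2.2.1 m hmS) k
    have h1 : m k ≠ 0 := fun h => hm0 (hloc m hmS ⟨k, h⟩)
    simp only [Pi.zero_apply] at h0
    simp only [Pi.one_apply]
    omega
  have hγc : ∀ x : I → ℤ, sgGamma S ≤ x → x ∈ S := fun x hx => cone_mem P hG hx
  have hγS : sgGamma S ∈ S := cond_subset (gamma_mem P hG)
  have hγ0 : sgGamma S ≠ 0 := by
    intro h
    have hx : P.mk2 1 0 ∈ S := hγc _ (by rw [h]; exact P.le_of (by simp) (by simp))
    have h2 := hloc _ hx ⟨P.j, by simp⟩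
    have h3 := congrFun h2 P.i
    simp at h3
  have hγM : sgGamma S ∈ M := hMmem.mpr ⟨hγS, hγ0⟩
  have hγ1 : (1 : I → ℤ) ≤ sgGamma S := hM1 _ hγM
  have heM : sgMu M ∈ M := by
    refine sgMu_mem P ⟨_, hγM⟩ 1 hM1 ?_
    intro a ha c hc
    have h1 : (fun k => min (a k) (c k)) ∈ S :=
      hG.2.2.2.2.1 a (hMmem.mp ha).1 c (hMmem.mp hc).1
    refine hMmem.mpr ⟨h1, ?_⟩
    intro h
    have h2 := congrFun h P.i
    have h3 := Pi.le_def.mp (hM1 a ha) P.i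
    have h4 := Pi.le_def.mp (hM1 c hc) P.i
    simp only [Pi.one_apply] at h3 h4
    simp only [Pi.zero_apply] at h2
    omega
  set e := sgMu M with he
  have hle : ∀ m ∈ M, e ≤ m := fun m hm k => sgMu_le 1 hM1 hm k
  have h1e : (1 : I → ℤ) ≤ e := hM1 _ heM
  have heS : e ∈ S := (hMmem.mp heM).1
  have hTe : ∀ t ∈ T, t + e ∈ M := fun t ht => ht e heM
  have hconeT : ∀ x : I → ℤ, sgGamma S - e ≤ x → x ∈ T := by
    intro x hx m hm
    have hxm : sgGamma S ≤ x + m := by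
      intro k
      have h2 := Pi.le_def.mp hx k
      have h3 := Pi.le_def.mp (hle m hm) k
      simp only [Pi.sub_apply] at h2
      simp only [Pi.add_apply]
      omega
    refine hMmem.mpr ⟨hγc _ hxm, ?_⟩
    intro h0
    have h1 := congrFun h0 P.i
    have h2 := Pi.le_def.mp hxm P.i
    have h3 := Pi.le_def.mp hγ1 P.i
    simp only [Pi.add_apply, Pi.zero_apply, Pi.one_apply] at h1 h2 h3
    omega
  have hγT : sgGamma T = sgGamma S - e := by
    refine sgMu_eq_of_least ?_ ?_
    · rw [mem_sgCond_iff]; intro x hx; exact hconeT x hx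
    · intro a ha
      have haC : a + e ∈ sgCond S := by
        rw [mem_sgCond_iff]
        intro z hz
        have hz' : a ≤ z - e := by
          intro k
          have h2 := Pi.le_def.mp hz k
          simp only [Pi.add_apply] at h2
          simp only [Pi.sub_apply]
          omega
        have h2 : z - e ∈ T := mem_sgCond_iff.mp ha _ hz'
        have h3 := hTe _ h2
        rw [show z - e + e = z by abel] at h3
        exact (hMmem.mp h3).1
      intro k
      have h2 := gamma_le hG haC k
      simp only [Pi.add_apply] at h2
      simp only [Pi.sub_apply]
      omega
  have hτT : sgTau T = sgTau S - e := by
    unfold sgTau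
    rw [hγT]
    abel
  have hMT : ∀ m ∈ M, m - e ∈ T := by
    intro m hm
    refine (hsymT (m - e)).2 ?_
    intro t ht hd
    have h2 : sgTau T - (m - e) = sgTau S - m := by rw [hτT]; abel
    rw [h2] at hd
    exact lemA P hG _ (hMmem.mp (ht m hm)).1 (mem_sgDelta_sub.mp hd)
  have hTS : ∀ t ∈ T, t ∉ sgDelta (sgTau S) → t ∈ S := by
    intro t ht hnd
    refine (hsymS t).2 ?_
    intro s hs hd
    by_cases hs0 : s = 0
    · subst hs0
      have h2 := mem_sgDelta_sub.mp hd
      rw [zero_add] at h2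
      exact hnd h2
    · have hsM : s ∈ M := hMmem.mpr ⟨hs, hs0⟩
      have h2 : s - e ∈ T := hMT s hsM
      have h3 : s - e ∈ sgDelta (sgTau T - t) := by
        rw [hτT, show sgTau S - e - t = (sgTau S - t) - e by abel]
        rw [mem_sgDelta_sub, show s - e + e = s by abel]
        exact hd
      exact (hsymT t).1 ht _ h2 h3
  have hnotD : ∀ (Q : Two I) (u : I → ℤ), u Q.j < sgTau S Q.j → u ∉ sgDelta (sgTau S) := by
    intro Q u hu hd
    rcases (mem_sgDelta_iff Q).1 hd with ⟨_, h2⟩ | ⟨h1, _⟩ <;> omega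
  have hlemD0 : ∀ (Q : Two I) (n : ℕ), ∀ u ∈ T, u Q.j < sgTau S Q.j → u Q.j ≤ (n : ℤ) →
      ∃ k : ℕ, u = fun l => (k : ℤ) * e l := by
    intro Q n
    induction n with
    | zero =>
      intro u hu hlt hle0
      by_cases hu0 : u = 0
      · exact ⟨0, by subst hu0; funext l; simp⟩
      · exfalso
        have huS : u ∈ S := hTS u hu (hnotD Q u hlt)
        have huM : u ∈ M := hMmem.mpr ⟨huS, hu0⟩
        have h2 : u - e ∈ T := hMT u huM
        have h3 := Pi.le_def.mp (hGT.2.2.1 _ h2) Q.j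
        have h4 := Pi.le_def.mp (hGT.2.2.1 _ hu) Q.j
        have h5 := Pi.le_def.mp h1e Q.j
        simp only [Pi.sub_apply, Pi.zero_apply, Pi.one_apply] at h3 h4 h5
        omega
    | succ n ih =>
      intro u hu hlt hle0
      by_cases hu0 : u = 0
      · exact ⟨0, by subst hu0; funext l; simp⟩
      · have huS : u ∈ S := hTS u hu (hnotD Q u hlt)
        have huM : u ∈ M := hMmem.mpr ⟨huS, hu0⟩
        have h2 : u - e ∈ T := hMT u huM
        have h5 := Pi.le_def.mp h1e Q.j
        simp only [Pi.one_apply] at h5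
        obtain ⟨k, hk⟩ := ih (u - e) h2 (by simp only [Pi.sub_apply]; omega)
          (by simp only [Pi.sub_apply]; push_cast at hle0 ⊢; omega)
        refine ⟨k + 1, ?_⟩
        funext l
        have h6 := congrFun hk l
        simp only [Pi.sub_apply] at h6
        push_cast
        linarith
  have hlemD : ∀ (Q : Two I), ∀ u ∈ T, u Q.j < sgTau S Q.j →
      ∃ k : ℕ, u = fun l => (k : ℤ) * e l := by
    intro Q u hu hlt
    have h0 := Pi.le_def.mp (hGT.2.2.1 _ hu) Q.j
    simp only [Pi.zero_apply] at h0
    exact hlemD0 Q (u Q.j).toNat u hu hlt (by omega)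
  have he1 : ∀ Q : Two I, e Q.j = 1 := by
    intro Q
    by_contra hne
    have h5 := Pi.le_def.mp h1e Q.j
    simp only [Pi.one_apply] at h5
    have h2 : 2 ≤ e Q.j := by omega
    have hu0 : sgGamma S - e ∈ T := hconeT _ le_rfl
    have hu1 : sgGamma S - e + Q.mk2 1 0 ∈ T := by
      refine hconeT _ ?_
      intro k
      rcases Q.univ k with rfl | rfl <;>
        simp only [Pi.add_apply, Pi.sub_apply, Two.mk2_i, Two.mk2_j] <;> omega
    have hj0 : (sgGamma S - e) Q.j < sgTau S Q.j := by
      simp only [Pi.sub_apply, tau_apply]; omega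
    have hj1 : (sgGamma S - e + Q.mk2 1 0) Q.j < sgTau S Q.j := by
      simp only [Pi.add_apply, Pi.sub_apply, Two.mk2_j, tau_apply]; omega
    obtain ⟨k0, hk0⟩ := hlemD Q _ hu0 hj0
    obtain ⟨k1, hk1⟩ := hlemD Q _ hu1 hj1
    have e0j := congrFun hk0 Q.j
    have e1j := congrFun hk1 Q.j
    have e0i := congrFun hk0 Q.i
    have e1i := congrFun hk1 Q.i
    simp only [Pi.sub_apply, Pi.add_apply, Two.mk2_j, Two.mk2_i] at e0j e1j e0i e1i
    have hkk : (k0 : ℤ) = k1 := by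
      have h3 : (k0 : ℤ) * e Q.j = (k1 : ℤ) * e Q.j := by linarith
      exact mul_right_cancel₀ (by omega) h3
    rw [hkk] at e0i
    linarith
  have heq1 : e = 1 := by
    funext k
    rcases P.univ k with rfl | rfl
    · have h2 := he1 P.swap; simpa using h2
    · have h2 := he1 P; simpa using h2
  have hτS : sgTau S ∈ S := by
    refine (hsymS (sgTau S)).2 ?_
    intro s hs hd
    rw [sub_self] at hd
    rcases (mem_sgDelta_iff P).1 hd with ⟨h1, h2⟩ | ⟨h1, h2⟩
    · have h0 : s ≠ 0 := by
        intro h; have h3 := congrFun h P.j; simp only [Pi.zero_apply] at h3 h2; omega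
      have h4 := congrFun (hloc s hs ⟨P.i, by simpa using h1⟩) P.j
      simp only [Pi.zero_apply] at h4 h2
      omega
    · have h0 : s ≠ 0 := by
        intro h; have h3 := congrFun h P.i; simp only [Pi.zero_apply] at h3 h2; omega
      have h4 := congrFun (hloc s hs ⟨P.j, by simpa using h1⟩) P.i
      simp only [Pi.zero_apply] at h4 h2
      omega
  have hτdiag : ∃ k : ℕ, ∀ l, sgTau S l = (k : ℤ) := by
    by_cases hτ0 : sgTau S = 0
    · exact ⟨0, fun l => by rw [hτ0]; simp⟩
    · have hτM : sgTau S ∈ M := hMmem.mpr ⟨hτS, hτ0⟩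
      have h2 : sgTau S - e ∈ T := hMT _ hτM
      have h5 := Pi.le_def.mp h1e P.j
      simp only [Pi.one_apply] at h5
      obtain ⟨k, hk⟩ := hlemD P _ h2 (by simp only [Pi.sub_apply]; omega)
      refine ⟨k + 1, fun l => ?_⟩
      have h6 := congrFun hk l
      simp only [Pi.sub_apply, heq1, Pi.one_apply, mul_one] at h6
      push_cast
      omega
  obtain ⟨kc, hkc⟩ := hτdiag
  constructor
  · exact heq1
  · refine ⟨2 * kc + 1, ⟨kc, by ring⟩, ?_⟩
    have hdiv : (2 * kc + 1 + 1) / 2 = kc + 1 := by omega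
    ext α
    simp only [Set.mem_union, Set.mem_setOf_eq, hdiv]
    constructor
    · intro hα
      by_cases hα0 : α = 0
      · left; exact ⟨0, by subst hα0; funext l; simp⟩
      · by_cases hγα : sgGamma S ≤ α
        · right
          intro l
          have h2 := Pi.le_def.mp hγα l
          have h3 := hkc l
          simp only [tau_apply] at h3
          push_cast
          omega
        · left
          have hαM : α ∈ M := hMmem.mpr ⟨hα, hα0⟩
          have h2 : α - e ∈ T := hMT _ hαM
          rw [Pi.le_def, not_forall] at hγα
          obtain ⟨l0, hl0⟩ := hγα
          push_neg at hl0
          have key : ∀ Q : Two I, α Q.j < sgGamma S Q.j → ∃ m : ℕ, α = fun _ => (m : ℤ) := by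
            intro Q hQ
            have h5 := Pi.le_def.mp h1e Q.j
            simp only [Pi.one_apply] at h5
            obtain ⟨k, hk⟩ := hlemD Q _ h2 (by simp only [Pi.sub_apply, tau_apply]; omega)
            refine ⟨k + 1, ?_⟩
            funext l
            have h6 := congrFun hk l
            simp only [Pi.sub_apply, heq1, Pi.one_apply, mul_one] at h6
            push_cast
            omega
          rcases P.univ l0 with rfl | rfl
          · exact key P.swap hl0
          · exact key P hl0
    · rintro (⟨m, rfl⟩ | hcone)
      · induction m with
        | zero =>
          have h0 : ((fun _ => ((0 : ℕ) : ℤ)) : I → ℤ) = 0 := by funext l; simp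
          rw [h0]; exact hG.1
        | succ m ihm =>
          have h1 := hG.2.1 _ ihm e heS
          have h2 : ((fun _ => ((m + 1 : ℕ) : ℤ)) : I → ℤ) = (fun _ => ((m : ℕ) : ℤ)) + e := by
            funext l
            simp only [Pi.add_apply, heq1, Pi.one_apply]
            push_cast
            ring
          rw [h2]; exact h1
      · refine hγc α ?_
        intro l
        have h3 := hkc l
        have h4 := hcone l
        simp only [tau_apply] at h3
        push_cast at h4
        have h6 : sgGamma S l = (kc : ℤ) + 1 := by omega
        linarith [h6, h4]
end

section
/- Let S be a good semigroup in ℤ^I. Then the set of maximal ideals of S is Max(S) = {S^{e_i} : i ∈ I}, where e_i denotes the i-th standard basis vector and S^{e_i} = {β ∈ S : β ≥ e_i}. -/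
section AuxMax

variable {I : Type*} [Fintype I] [Nonempty I] [DecidableEq I]

lemma aux_inf_mem {E : Set (I → ℤ)} (hE : propE1 E) (f : I → (I → ℤ))
    (hf : ∀ j, f j ∈ E) (T : Finset I) (hT : T.Nonempty) :
    (fun i => T.inf' hT (fun j => f j i)) ∈ E := by
  induction hT using Finset.Nonempty.cons_induction with
  | singleton a => simpa using hf a
  | cons a s ha hs ih =>
      have h2 : (fun i => (Finset.cons a s ha).inf' (Finset.cons_nonempty ha)
          (fun j => f j i)) = fun i => min (f a i) (s.inf' hs fun j => f j i) := by
        funext i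
        rw [Finset.inf'_cons]
      rw [h2]
      exact hE (f a) (hf a) _ ih

lemma aux_single_le {i : I} {β : I → ℤ} (hβ : 0 ≤ β) :
    Pi.single i 1 ≤ β ↔ 1 ≤ β i := by
  constructor
  · intro h
    have := h i
    simpa using this
  · intro h k
    by_cases hk : k = i
    · subst hk; simpa using h
    · rw [Pi.single_eq_of_ne hk]; exact hβ k

/-- A proper good semigroup ideal contained in `S` is contained in some `S^{e_i}`. -/
lemma aux_sub_single {S E : Set (I → ℤ)} (hS : IsGoodSemigroup S)
    (hE : IsGoodIdeal S E) (hES : E ⊆ S) (hne : E ≠ S) :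
    ∃ i : I, ∀ β ∈ E, Pi.single i 1 ≤ β := by
  by_contra h
  push_neg at h
  choose f hfE hf using h
  -- each f i ∈ E has (f i) i = 0
  have hf0 : ∀ i, f i i = 0 := by
    intro i
    have h0 : 0 ≤ f i := hS.2.2.1 _ (hES (hfE i))
    have h1 : ¬ (1 ≤ f i i) := fun hc => hf i ((aux_single_le h0).mpr hc)
    have h2 : (0 : ℤ) ≤ f i i := h0 i
    omega
  have hmem := aux_inf_mem hE.2.1 f hfE Finset.univ Finset.univ_nonempty
  have hzero : (fun i => Finset.univ.inf' Finset.univ_nonempty (fun j => f j i)) =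
      (0 : I → ℤ) := by
    funext i
    have h1 : Finset.univ.inf' Finset.univ_nonempty (fun j => f j i) ≤ f i i :=
      Finset.inf'_le _ (Finset.mem_univ i)
    have h2 : (0 : ℤ) ≤ Finset.univ.inf' Finset.univ_nonempty (fun j => f j i) :=
      Finset.le_inf' _ _ (fun j _ => hS.2.2.1 _ (hES (hfE j)) i)
    have := hf0 i
    simp only [Pi.zero_apply]
    omega
  rw [hzero] at hmem
  apply hne
  apply Set.Subset.antisymm hES
  intro β hβ
  have := hE.1.2.1 0 hmem β hβ
  simpa using this

/-- Via (E2): if `S^{e_i} ⊆ S^{e_j}` then `S^{e_j} ⊆ S^{e_i}`. -/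
lemma aux_single_trans {S : Set (I → ℤ)} (hS : IsGoodSemigroup S) (i j : I)
    (h : ∀ β ∈ S, Pi.single i 1 ≤ β → Pi.single j 1 ≤ β) :
    ∀ β ∈ S, Pi.single j 1 ≤ β → Pi.single i 1 ≤ β := by
  intro α hα hαj
  by_contra hc
  have hα0 : 0 ≤ α := hS.2.2.1 _ hα
  have hαi : α i = 0 := by
    have h1 : ¬ (1 ≤ α i) := fun hx => hc ((aux_single_le hα0).mpr hx)
    have h2 : (0 : ℤ) ≤ α i := hα0 i
    omega
  have hαj1 : 1 ≤ α j := (aux_single_le hα0).mp hαj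
  -- apply E2 to α, 0 at index i
  obtain ⟨ε, hεS, hεi, hεp⟩ := hS.2.2.2.2.2 α hα 0 hS.1 i (by simpa using hαi)
  have hε0 : 0 ≤ ε := hS.2.2.1 _ hεS
  have hεi1 : 1 ≤ ε i := by
    have := hεi
    omega
  have hεj : ε j = 0 := by
    have h4 := (hεp j).2 (by simp; omega)
    have h5 : (0 : ℤ) ≤ α j := hα0 j
    simp only [Pi.zero_apply] at h4
    rw [h4]
    omega
  have := h ε hεS ((aux_single_le hε0).mpr hεi1)
  have := (aux_single_le hε0).mp this
  omega

/-- `S^{e_i}` is a good semigroup ideal of `S`. -/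
lemma aux_single_goodIdeal {S : Set (I → ℤ)} (hS : IsGoodSemigroup S) (i : I) :
    IsGoodIdeal S {β ∈ S | Pi.single i 1 ≤ β} := by
  obtain ⟨α, hα⟩ := hS.2.2.2.1
  refine ⟨⟨?_, ?_, ⟨0, hS.1, ?_⟩⟩, ?_, ?_⟩
  · have hm : (fun k => max (α k) ((Pi.single i 1 : I → ℤ) k)) ∈
        {β ∈ S | Pi.single i 1 ≤ β} :=
      ⟨hα _ (fun k => le_max_left _ _), fun k => le_max_right _ _⟩
    exact ⟨_, hm⟩
  · rintro a ⟨haS, hai⟩ b hbS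
    refine ⟨hS.2.1 a haS b hbS, ?_⟩
    intro k
    have h1 : (0 : ℤ) ≤ b k := hS.2.2.1 b hbS k
    have h2 := hai k
    simp only [Pi.add_apply]
    exact le_trans h2 (by linarith)
  · rintro β ⟨hβS, _⟩
    simpa using hβS
  · rintro a ⟨haS, hai⟩ b ⟨hbS, hbi⟩
    refine ⟨hS.2.2.2.2.1 a haS b hbS, ?_⟩
    intro k
    exact le_min (hai k) (hbi k)
  · rintro a ⟨haS, hai⟩ b ⟨hbS, hbi⟩ j hab
    obtain ⟨ε, hεS, hεj, hεp⟩ := hS.2.2.2.2.2 a haS b hbS j hab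
    refine ⟨ε, ⟨hεS, ?_⟩, hεj, hεp⟩
    intro k
    exact le_trans (le_min (hai k) (hbi k)) (hεp k).1

end AuxMax

/-- **Lemma.** Let `S` be a good semigroup in `ℤ^I`. Then the maximal ideals of
`S` are exactly the ideals `S^{e_i} = {β ∈ S : β ≥ e_i}` for `i ∈ I`. -/
theorem stmt_14 {I : Type*} [Fintype I] [Nonempty I] [DecidableEq I]
    (S : Set (I → ℤ)) (hS : IsGoodSemigroup S) :
    {M : Set (I → ℤ) | IsGoodIdeal S M ∧ M ⊆ S ∧ M ≠ S ∧
        ∀ E : Set (I → ℤ), IsGoodIdeal S E → M ⊆ E → E ⊆ S → E ≠ S → E = M} =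
      {E : Set (I → ℤ) | ∃ i : I, E = {β ∈ S | Pi.single i 1 ≤ β}} := by
  have hne : ∀ i : I, {β ∈ S | Pi.single i 1 ≤ β} ≠ S := by
    intro i hc
    have h0 : (0 : I → ℤ) ∈ S := hS.1
    rw [← hc] at h0
    have := h0.2 i
    simp at this
  ext M
  simp only [Set.mem_setOf_eq]
  constructor
  · rintro ⟨hM, hMS, hMne, hmax⟩
    obtain ⟨i, hi⟩ := aux_sub_single hS hM hMS hMne
    refine ⟨i, ?_⟩
    have hsub : M ⊆ {β ∈ S | Pi.single i 1 ≤ β} := fun β hβ => ⟨hMS hβ, hi β hβ⟩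
    have := hmax _ (aux_single_goodIdeal hS i) hsub (fun β hβ => hβ.1) (hne i)
    exact this.symm
  · rintro ⟨i, rfl⟩
    refine ⟨aux_single_goodIdeal hS i, fun β hβ => hβ.1, hne i, ?_⟩
    intro E hE hME hES hEne
    obtain ⟨j, hj⟩ := aux_sub_single hS hE hES hEne
    have hij : ∀ β ∈ S, Pi.single i 1 ≤ β → Pi.single j 1 ≤ β := by
      intro β hβS hβi
      exact hj β (hME ⟨hβS, hβi⟩)
    have hji := aux_single_trans hS i j hij
    apply Set.Subset.antisymm
    · intro β hβ
      exact ⟨hES hβ, hji β (hES hβ) (hj β hβ)⟩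
    · exact hME
end

section
/- Let R and A be one-dimensional equidimensional (semilocal Noetherian) Cohen–Macaulay rings such that A is a regular fractional ideal of R (in particular R ⊆ A ⊆ Q_R and Q_A = Q_R). If 𝔎 is a canonical ideal of R, then 𝔎 : A is a canonical ideal of A. -/
/-! Fractional ideals of one-dimensional Cohen–Macaulay rings inside their
total ring of fractions, canonical ideals, Gorensteinness, admissible rings. -/

open scoped Pointwise

section FractionalIdeals

variable {Q : Type*} [CommRing Q]

/-- The colon (quotient) `𝔦 : 𝔧 = {x ∈ Q : x𝔧 ⊆ 𝔦}` of two subsets of `Q`. -/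
def ColonSet (𝔦 𝔧 : Set Q) : Set Q :=
  {x | ∀ y ∈ 𝔧, x * y ∈ 𝔦}

/-- `𝔦 ⊆ Q` is a fractional ideal of the subring `A` of `Q`: an `A`-submodule
of `Q` such that `d𝔦 ⊆ A` for some non-zerodivisor `d` of `A`. -/
def IsFracIdealOf (A : Subring Q) (𝔦 : Set Q) : Prop :=
  (0 : Q) ∈ 𝔦 ∧ (∀ x ∈ 𝔦, ∀ y ∈ 𝔦, x + y ∈ 𝔦) ∧
    (∀ a ∈ A, ∀ x ∈ 𝔦, a * x ∈ 𝔦) ∧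
    ∃ d ∈ A, (∀ y ∈ A, d * y = 0 → y = 0) ∧ ∀ x ∈ 𝔦, d * x ∈ (A : Set Q)

/-- A fractional ideal is regular if it contains a unit of `Q`. -/
def IsRegularFI (𝔦 : Set Q) : Prop :=
  ∃ x ∈ 𝔦, IsUnit x

/-- `𝔦^n` for a fractional ideal `𝔦` of `A` (`𝔦^0 = A`); at each step we take
the additive closure of the set of products. -/
def powFI (A : Subring Q) (𝔦 : Set Q) : ℕ → Set Q
  | 0 => A
  | n + 1 => (AddSubgroup.closure (𝔦 * powFI A 𝔦 n) : AddSubgroup Q)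

/-- The blowup `A^𝔦 = ⋃ₙ (𝔦ⁿ : 𝔦ⁿ)` of a fractional ideal `𝔦` of `A`. -/
def blowupFI (A : Subring Q) (𝔦 : Set Q) : Set Q :=
  ⋃ n : ℕ, ColonSet (powFI A 𝔦 n) (powFI A 𝔦 n)

/-- A fractional ideal `𝔦` of `A` is stable if `A^𝔦 = 𝔦 : 𝔦`. -/
def IsStableFI (A : Subring Q) (𝔦 : Set Q) : Prop :=
  blowupFI A 𝔦 = ColonSet 𝔦 𝔦

/-- `𝔎` is a canonical ideal of the subring `A` of `Q`: a regular fractional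
ideal of `A` with `𝔎 : (𝔎 : 𝔦) = 𝔦` for every regular fractional ideal `𝔦`. -/
def IsCanonicalIdealOf (A : Subring Q) (𝔎 : Set Q) : Prop :=
  IsFracIdealOf A 𝔎 ∧ IsRegularFI 𝔎 ∧
    ∀ 𝔦 : Set Q, IsFracIdealOf A 𝔦 → IsRegularFI 𝔦 →
      ColonSet 𝔎 (ColonSet 𝔎 𝔦) = 𝔦

end FractionalIdeals

section Rings

/-- A one-dimensional semilocal Cohen–Macaulay (Noetherian) ring: Noetherian,
finitely many maximal ideals, Krull dimension one, and no maximal ideal is an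
associated prime (i.e. every localization at a maximal ideal has depth ≥ 1,
which in dimension one is Cohen–Macaulayness). -/
def IsOneDimSemilocalCM (R : Type*) [CommRing R] : Prop :=
  IsNoetherianRing R ∧ {m : Ideal R | m.IsMaximal}.Finite ∧
    ringKrullDim R = 1 ∧
    ∀ m : Ideal R, m.IsMaximal → ¬ IsAssociatedPrime m R

/-- A one-dimensional equidimensional semilocal Cohen–Macaulay ring: as above,
and moreover `dim R/𝔭 = 1` for every minimal prime `𝔭`. -/
def IsOneDimEquidimSemilocalCM (R : Type*) [CommRing R] : Prop :=
  IsOneDimSemilocalCM R ∧ ∀ p ∈ minimalPrimes R, ringKrullDim (R ⧸ p) = 1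

/-- A subring `A` of `Q` (thought of as an integral extension of a base ring
inside its total ring of fractions, so that `Q_A = Q`) is Gorenstein if it is a
one-dimensional equidimensional semilocal Cohen–Macaulay ring which is a
canonical ideal of itself. -/
def IsGorensteinSubring {Q : Type*} [CommRing Q] (A : Subring Q) : Prop :=
  IsOneDimEquidimSemilocalCM A ∧ IsCanonicalIdealOf A (A : Set Q)

/-- Residually rational: for every maximal ideal `𝔫` of the integral closure
`R̄` of `R` in `Q_R`, the natural map `R → R̄/𝔫` is surjective (equivalently
`R/𝔪 = R̄/𝔫` where `𝔪 = 𝔫 ∩ R`). -/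
def ResiduallyRational (R : Type*) [CommRing R] : Prop :=
  ∀ 𝔫 : Ideal (integralClosure R (FractionRing R)), 𝔫.IsMaximal →
    ∀ x : integralClosure R (FractionRing R), ∃ r : R,
      x - algebraMap R (integralClosure R (FractionRing R)) r ∈ 𝔫

/-- Large residue fields: `|R/𝔪| ≥ #(valuation rings of Q_{R_𝔪} over R_𝔪)` for
every maximal ideal `𝔪`; a valuation ring of a ring `Q` is a proper subring `V`
with `Q ∖ V` multiplicatively closed. -/
def LargeResidueFields (R : Type*) [CommRing R] : Prop :=
  ∀ 𝔪 : Ideal R, ∀ h𝔪 : 𝔪.IsMaximal,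
    haveI : 𝔪.IsPrime := h𝔪.isPrime
    Cardinal.mk {V : Subring (FractionRing (Localization.AtPrime 𝔪)) //
        V ≠ ⊤ ∧ (∀ x y, x ∉ V → y ∉ V → x * y ∉ V) ∧
        Set.range (algebraMap (Localization.AtPrime 𝔪)
          (FractionRing (Localization.AtPrime 𝔪))) ⊆ (V : Set _)} ≤
      Cardinal.mk (R ⧸ 𝔪)

/-- An admissible ring: a one-dimensional equidimensional semilocal
Cohen–Macaulay ring which is analytically reduced (the completion at the
Jacobson radical is reduced), residually rational, and has large residue
fields. -/
def IsAdmissibleRing (R : Type*) [CommRing R] : Prop :=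
  IsOneDimEquidimSemilocalCM R ∧
    IsReduced (AdicCompletion (Ideal.jacobson (⊥ : Ideal R)) R) ∧
    ResiduallyRational R ∧ LargeResidueFields R

end Rings

/-! Since `𝔎 : A ⊆ 𝔎` is an `A`-module, `(𝔎 : A) : 𝔧 = 𝔎 : 𝔧` for every `A`-module `𝔧 ⊆ Q`.
Applying this twice, `(𝔎 : A) : ((𝔎 : A) : 𝔦) = 𝔎 : (𝔎 : 𝔦) = 𝔦` for every regular fractional
ideal `𝔦` of `A`, which is also one of `R` because `A` is a fractional ideal of `R`. The
denominators of `A` over `R` are units of `Q`, which is what lets fractional ideals and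
non-zerodivisors pass between `R` and `A`. -/

section Colon

variable {Q : Type*} [CommRing Q]

theorem colonSet_subset_of_one_mem {𝔦 𝔧 : Set Q} (h : (1 : Q) ∈ 𝔧) : ColonSet 𝔦 𝔧 ⊆ 𝔦 :=
  fun x hx => by simpa using hx 1 h

theorem colonSet_mul_mem_of_right {A : Subring Q} {𝔦 𝔧 : Set Q}
    (h𝔧 : ∀ a ∈ A, ∀ y ∈ 𝔧, a * y ∈ 𝔧) : ∀ a ∈ A, ∀ x ∈ ColonSet 𝔦 𝔧, a * x ∈ ColonSet 𝔦 𝔧 := by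
  intro a ha x hx y hy
  rw [mul_comm a, mul_assoc]
  exact hx _ (h𝔧 a ha y hy)

theorem colonSet_colonSet_subring (𝔎 : Set Q) (A : Subring Q) {𝔧 : Set Q}
    (h𝔧 : ∀ a ∈ A, ∀ y ∈ 𝔧, a * y ∈ 𝔧) : ColonSet (ColonSet 𝔎 A) 𝔧 = ColonSet 𝔎 𝔧 := by
  ext x
  refine ⟨fun hx y hy => colonSet_subset_of_one_mem A.one_mem (hx y hy), fun hx y hy a ha => ?_⟩
  rw [mul_assoc, mul_comm y]
  exact hx _ (h𝔧 a ha y hy)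

end Colon

section Conductor

variable {Q : Type*} [CommRing Q] {R A : Subring Q} {d : Q}

theorem IsFracIdealOf.of_subring_le (hRA : R ≤ A) (hd : IsUnit d) (hdA : ∀ x ∈ A, d * x ∈ R)
    {𝔦 : Set Q} (h : IsFracIdealOf A 𝔦) : IsFracIdealOf R 𝔦 := by
  obtain ⟨h0, hadd, hmul, e, heA, he, he𝔦⟩ := h
  refine ⟨h0, hadd, fun r hr x hx => hmul r (hRA hr) x hx, d * e, hdA e heA, ?_, ?_⟩
  · intro y hy hy0
    rw [mul_assoc, hd.mul_right_eq_zero] at hy0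
    exact he y (hRA hy) hy0
  · intro x hx
    rw [mul_assoc]
    exact hdA _ (he𝔦 x hx)

theorem IsFracIdealOf.colonSet_subring (hRA : R ≤ A) (hd : IsUnit d)
    (hdA : ∀ x ∈ A, d * x ∈ R) {𝔎 : Set Q} (h : IsFracIdealOf R 𝔎) :
    IsFracIdealOf A (ColonSet 𝔎 A) := by
  obtain ⟨h0, hadd, -, e, heR, he, he𝔎⟩ := h
  refine ⟨fun y _ => by simpa using h0, fun x hx x' hx' y hy => ?_,
    colonSet_mul_mem_of_right fun a ha y hy => A.mul_mem ha hy, e, hRA heR, ?_, ?_⟩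
  · rw [add_mul]
    exact hadd _ (hx y hy) _ (hx' y hy)
  · intro y hy hy0
    have : e * (d * y) = 0 := by rw [mul_left_comm, hy0, mul_zero]
    exact hd.mul_right_eq_zero.mp (he _ (hdA y hy) this)
  · exact fun x hx => hRA (he𝔎 x (colonSet_subset_of_one_mem A.one_mem hx))

theorem IsRegularFI.colonSet_subring (hd : IsUnit d) (hdA : ∀ x ∈ A, d * x ∈ R) {𝔎 : Set Q}
    (h𝔎 : IsFracIdealOf R 𝔎) (hreg : IsRegularFI 𝔎) : IsRegularFI (ColonSet 𝔎 A) := by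
  obtain ⟨u, hu𝔎, hu⟩ := hreg
  refine ⟨d * u, fun a ha => ?_, hd.mul hu⟩
  rw [mul_right_comm]
  exact h𝔎.2.2.1 _ (hdA a ha) u hu𝔎

theorem IsCanonicalIdealOf.colonSet_subring (hRA : R ≤ A) (hd : IsUnit d)
    (hdA : ∀ x ∈ A, d * x ∈ R) {𝔎 : Set Q} (h𝔎 : IsCanonicalIdealOf R 𝔎) :
    IsCanonicalIdealOf A (ColonSet 𝔎 A) := by
  obtain ⟨hfi, hreg, hcan⟩ := h𝔎
  refine ⟨hfi.colonSet_subring hRA hd hdA, hreg.colonSet_subring hd hdA hfi, fun 𝔦 h𝔦 h𝔦reg => ?_⟩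
  have h𝔦mul : ∀ a ∈ A, ∀ y ∈ 𝔦, a * y ∈ 𝔦 := h𝔦.2.2.1
  rw [colonSet_colonSet_subring 𝔎 A h𝔦mul,
    colonSet_colonSet_subring 𝔎 A (colonSet_mul_mem_of_right h𝔦mul)]
  exact hcan 𝔦 (h𝔦.of_subring_le hRA hd hdA) h𝔦reg

end Conductor

theorem IsFractionRing.isUnit_of_mem_range_of_mul_eq_zero {R K : Type*} [CommRing R] [CommRing K]
    [Algebra R K] [IsFractionRing R K] {d : K} (hd : d ∈ (algebraMap R K).range)
    (h : ∀ y ∈ (algebraMap R K).range, d * y = 0 → y = 0) : IsUnit d := by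
  obtain ⟨r, rfl⟩ := hd
  refine IsLocalization.map_units (M := nonZeroDivisors R) K ⟨r, ?_⟩
  refine mem_nonZeroDivisors_iff_right.mpr fun s hs => IsFractionRing.injective R K ?_
  rw [map_zero]
  exact h _ ⟨s, rfl⟩ (by rw [← map_mul, mul_comm, hs, map_zero])

theorem stmt_16_general (R : Type*) [CommRing R]
    (A : Subring (FractionRing R))
    (hRA : (algebraMap R (FractionRing R)).range ≤ A)
    (hAfi : IsFracIdealOf (algebraMap R (FractionRing R)).range (A : Set (FractionRing R)))
    (𝔎 : Set (FractionRing R))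
    (h𝔎 : IsCanonicalIdealOf (algebraMap R (FractionRing R)).range 𝔎) :
    IsCanonicalIdealOf A (ColonSet 𝔎 (A : Set (FractionRing R))) := by
  obtain ⟨-, -, -, d, hdR, hd, hdA⟩ := hAfi
  exact h𝔎.colonSet_subring hRA (IsFractionRing.isUnit_of_mem_range_of_mul_eq_zero hdR hd) hdA

/-- **Lemma.** Let `R` and `A` be one-dimensional equidimensional semilocal
Cohen–Macaulay rings such that `A` is a regular fractional ideal of `R`
(in particular `R ⊆ A ⊆ Q_R`). If `𝔎` is a canonical ideal of `R`, then
`𝔎 : A` is a canonical ideal of `A`. -/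
theorem stmt_16 (R : Type*) [CommRing R] (hR : IsOneDimEquidimSemilocalCM R)
    (A : Subring (FractionRing R))
    (hRA : (algebraMap R (FractionRing R)).range ≤ A)
    (hA : IsOneDimEquidimSemilocalCM A)
    (hAfi : IsFracIdealOf (algebraMap R (FractionRing R)).range (A : Set (FractionRing R)))
    (𝔎 : Set (FractionRing R))
    (h𝔎 : IsCanonicalIdealOf (algebraMap R (FractionRing R)).range 𝔎) :
    IsCanonicalIdealOf A (ColonSet 𝔎 (A : Set (FractionRing R))) :=
  stmt_16_general R A hRA hAfi 𝔎 h𝔎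
end
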